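/- arXiv:math/0002060 — 4 statements merged into one kernel-verified Lean document; each statement's English description precedes it below -/
import Mathlib

section
/- The zigzag algebra A(Γ) is a finite-dimensional ℂ-algebra, and its dimension over ℂ equals 2·|V| + 2·|E|, where |V| is the number of vertices and |E| the number of edges of Γ. -/
/-!
The zigzag algebra `A(Γ)` of a finite simple graph `Γ`, presented as a quotient of the
free algebra on generators `{e_a : a ∈ V} ∪ {x_{ab} : a,b adjacent}`.
-/

noncomputable section

/-- Generators of the zigzag algebra: one idempotent `e_a` per vertex `a`, and one
generator `x_{ab}` (the arrow `a → b` in the double quiver) per ordered adjacent pair. -/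
def ZigzagGen {V : Type} (G : SimpleGraph V) : Type :=
  V ⊕ {p : V × V // G.Adj p.1 p.2}

/-- The idempotent generator `e_a` inside the free algebra. -/
def zge (k : Type) [CommRing k] {V : Type} (G : SimpleGraph V) (a : V) :
    FreeAlgebra k (ZigzagGen G) :=
  FreeAlgebra.ι k (Sum.inl a)

/-- The arrow generator `x_{ab}` inside the free algebra. -/
def zgx (k : Type) [CommRing k] {V : Type} (G : SimpleGraph V) {a b : V} (h : G.Adj a b) :
    FreeAlgebra k (ZigzagGen G) :=
  FreeAlgebra.ι k (Sum.inr ⟨(a, b), h⟩)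

/-- The defining relations of the zigzag algebra `A(Γ)`:
`e_a e_b = δ_{ab} e_a`, `Σ_a e_a = 1`, `e_b x_{ab} = x_{ab} = x_{ab} e_a`,
`x_{bc} x_{ab} = 0` for `c ≠ a`, and `x_{ba} x_{ab} = x_{ca} x_{ac}`. -/
inductive ZigzagRel (k : Type) [CommRing k] {V : Type} [Fintype V] (G : SimpleGraph V) :
    FreeAlgebra k (ZigzagGen G) → FreeAlgebra k (ZigzagGen G) → Prop
  | idem (a : V) : ZigzagRel k G (zge k G a * zge k G a) (zge k G a)
  | orth (a b : V) (h : a ≠ b) : ZigzagRel k G (zge k G a * zge k G b) 0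
  | sum_one : ZigzagRel k G (∑ a : V, zge k G a) 1
  | target_id {a b : V} (h : G.Adj a b) :
      ZigzagRel k G (zge k G b * zgx k G h) (zgx k G h)
  | source_id {a b : V} (h : G.Adj a b) :
      ZigzagRel k G (zgx k G h * zge k G a) (zgx k G h)
  | comp_zero {a b c : V} (h₁ : G.Adj a b) (h₂ : G.Adj b c) (hca : c ≠ a) :
      ZigzagRel k G (zgx k G h₂ * zgx k G h₁) 0
  | zigzag {a b c : V} (hab : G.Adj a b) (hac : G.Adj a c) :
      ZigzagRel k G (zgx k G hab.symm * zgx k G hab) (zgx k G hac.symm * zgx k G hac)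

/-- The zigzag algebra `A(Γ)`. -/
abbrev ZigzagAlgebra (k : Type) [CommRing k] {V : Type} [Fintype V] (G : SimpleGraph V) : Type :=
  RingQuot (ZigzagRel k G)

/-- The idempotent `e_a` of the zigzag algebra. -/
def ZigzagAlgebra.e (k : Type) [CommRing k] {V : Type} [Fintype V] (G : SimpleGraph V)
    (a : V) : ZigzagAlgebra k G :=
  RingQuot.mkAlgHom k (ZigzagRel k G) (zge k G a)

/-!
The elements `e_a`, the loops `x_{ba} x_{ab}` (one per vertex `a`; by the zigzag relation the
neighbour `b` does not matter) and the arrows `x_{ab}` form a basis of `A(Γ)`, whose size is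
`|V| + |V| + #darts = 2|V| + 2|E|`.

They span: their span contains `1 = ∑ e_a` and is stable under left multiplication by the
generators. The only product that is not visibly a basis element or zero is
`x_{ab} x_{ba} x_{ab}`; connectedness and `|V| > 2` give a vertex `c ∉ {a, b}` adjacent to `a`
(or `b`), and moving the middle round trip to `c` by the zigzag relation kills it.

They are independent: left multiplication by the generators permutes the candidate basis up to
zeros, and these partial maps of the index set satisfy the defining relations, so they define a
representation of `A(Γ)` in which `z ↦ z · 1` reads off coordinates.
-/

namespace Matrix

variable {ι R : Type*} [DecidableEq ι] [Semiring R]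

def ofPartialMap (f : ι → Option ι) : Matrix ι ι R :=
  of fun j i => if f i = some j then 1 else 0

theorem ofPartialMap_mul [Fintype ι] (f g : ι → Option ι) :
    (ofPartialMap f * ofPartialMap g : Matrix ι ι R) = ofPartialMap fun i => (g i).bind f := by
  ext j i
  rcases hg : g i with _ | l <;> simp [ofPartialMap, mul_apply, hg]

theorem ofPartialMap_none : (ofPartialMap (fun _ => none) : Matrix ι ι R) = 0 := by
  ext j i
  simp [ofPartialMap]

end Matrix

theorem SimpleGraph.Connected.exists_adj_of_ne_of_ne {V : Type*} {G : SimpleGraph V}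
    (hG : G.Connected) {a b v : V} (hva : v ≠ a) (hvb : v ≠ b) :
    ∃ c, (G.Adj a c ∨ G.Adj b c) ∧ c ≠ a ∧ c ≠ b := by
  obtain ⟨w⟩ := hG.preconnected a v
  obtain ⟨d, -, hd₁, hd₂⟩ := w.exists_boundary_dart {a, b} (by simp) (by simp [hva, hvb])
  simp only [Set.mem_insert_iff, Set.mem_singleton_iff, not_or] at hd₁ hd₂
  refine ⟨d.snd, ?_, hd₂⟩
  rcases hd₁ with h | h <;> simp [← h, d.adj]

namespace ZigzagAlgebra

section Relations

variable (k : Type) [CommRing k] {V : Type} [Fintype V] {G : SimpleGraph V}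

def x {a b : V} (h : G.Adj a b) : ZigzagAlgebra k G :=
  RingQuot.mkAlgHom k (ZigzagRel k G) (zgx k G h)

variable {k}

theorem e_mul_self (a : V) : e k G a * e k G a = e k G a := by
  rw [e, ← map_mul]
  exact RingQuot.mkAlgHom_rel k (.idem a)

theorem e_mul_e_of_ne {a b : V} (h : a ≠ b) : e k G a * e k G b = 0 := by
  rw [e, e, ← map_mul, ← map_zero (RingQuot.mkAlgHom k (ZigzagRel k G))]
  exact RingQuot.mkAlgHom_rel k (.orth a b h)

theorem e_mul_e [DecidableEq V] (a b : V) :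
    e k G a * e k G b = if a = b then e k G b else 0 := by
  split_ifs with h
  · rw [h, e_mul_self]
  · exact e_mul_e_of_ne h

theorem sum_e : ∑ a, e k G a = 1 := by
  simp only [e, ← map_sum]
  rw [← map_one (RingQuot.mkAlgHom k (ZigzagRel k G))]
  exact RingQuot.mkAlgHom_rel k .sum_one

theorem e_mul_x [DecidableEq V] (c : V) {a b : V} (h : G.Adj a b) :
    e k G c * x k h = if c = b then x k h else 0 := by
  have target_id : e k G b * x k h = x k h := by
    rw [e, x, ← map_mul]
    exact RingQuot.mkAlgHom_rel k (.target_id h)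
  split_ifs with hc
  · rw [hc, target_id]
  · rw [← target_id, ← mul_assoc, e_mul_e_of_ne hc, zero_mul]

theorem x_mul_e [DecidableEq V] {a b : V} (h : G.Adj a b) (c : V) :
    x k h * e k G c = if a = c then x k h else 0 := by
  have source_id : x k h * e k G a = x k h := by
    rw [e, x, ← map_mul]
    exact RingQuot.mkAlgHom_rel k (.source_id h)
  split_ifs with hc
  · rw [← hc, source_id]
  · rw [← source_id, mul_assoc, e_mul_e_of_ne hc, mul_zero]

theorem x_mul_x_of_ne {a b c d : V} (h₁ : G.Adj a b) (h₂ : G.Adj c d)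
    (hne : ¬(b = c ∧ d = a)) : x k h₂ * x k h₁ = 0 := by
  classical
  by_cases hbc : b = c
  · subst hbc
    rw [x, x, ← map_mul, ← map_zero (RingQuot.mkAlgHom k (ZigzagRel k G))]
    exact RingQuot.mkAlgHom_rel k (.comp_zero h₁ h₂ fun hda => hne ⟨rfl, hda⟩)
  · calc x k h₂ * x k h₁ = x k h₂ * e k G c * (e k G b * x k h₁) := by
          rw [x_mul_e, e_mul_x, if_pos rfl, if_pos rfl]
      _ = x k h₂ * (e k G c * e k G b) * x k h₁ := by simp only [mul_assoc]
      _ = 0 := by rw [e_mul_e_of_ne (Ne.symm hbc), mul_zero, zero_mul]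

theorem x_symm_mul_x {a b c : V} (hab : G.Adj a b) (hac : G.Adj a c) :
    x k hab.symm * x k hab = x k hac.symm * x k hac := by
  rw [x, x, x, x, ← map_mul, ← map_mul]
  exact RingQuot.mkAlgHom_rel k (.zigzag hab hac)

theorem x_mul_x_symm_mul_x_eq_zero (hG : G.Connected) (hcard : 2 < Fintype.card V) {a b : V}
    (h : G.Adj a b) : x k h * x k h.symm * x k h = 0 := by
  classical
  obtain ⟨v, -, hv⟩ := Finset.exists_mem_notMem_of_card_lt_card
    ((Finset.card_le_two (a := a) (b := b)).trans_lt hcard)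
  simp only [Finset.mem_insert, Finset.mem_singleton, not_or] at hv
  obtain ⟨c, hac | hbc, hca, hcb⟩ := hG.exists_adj_of_ne_of_ne hv.1 hv.2
  · rw [mul_assoc, x_symm_mul_x h hac, ← mul_assoc,
      x_mul_x_of_ne hac.symm h (by simp [hcb.symm]), zero_mul]
  · rw [x_symm_mul_x h.symm hbc, mul_assoc, x_mul_x_of_ne h hbc (by simp [hca]), mul_zero]

theorem submodule_eq_top_of_one_mem {S : Submodule k (ZigzagAlgebra k G)} (one_mem : 1 ∈ S)
    (e_mul_mem : ∀ a, ∀ y ∈ S, e k G a * y ∈ S)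
    (x_mul_mem : ∀ a b (h : G.Adj a b), ∀ y ∈ S, x k h * y ∈ S) : S = ⊤ := by
  rw [eq_top_iff]
  rintro z -
  obtain ⟨z, rfl⟩ := RingQuot.mkAlgHom_surjective k (ZigzagRel k G) z
  suffices ∀ y ∈ S, RingQuot.mkAlgHom k (ZigzagRel k G) z * y ∈ S by
    simpa using this 1 one_mem
  induction z using FreeAlgebra.induction with
  | grade0 r =>
    intro y hy
    rw [AlgHom.commutes, Algebra.algebraMap_eq_smul_one, smul_one_mul]
    exact S.smul_mem r hy
  | grade1 g =>
    rcases g with a | ⟨⟨a, b⟩, h⟩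
    · exact e_mul_mem a
    · exact x_mul_mem a b h
  | mul z w hz hw =>
    intro y hy
    rw [map_mul, mul_assoc]
    exact hz _ (hw y hy)
  | add z w hz hw =>
    intro y hy
    rw [map_add, add_mul]
    exact S.add_mem (hz y hy) (hw y hy)

end Relations

section Spanning

variable {k : Type} [CommRing k] {V : Type} [Fintype V] {G : SimpleGraph V}

abbrev BasisIndex (G : SimpleGraph V) : Type := V ⊕ V ⊕ G.Dart

def target : BasisIndex G → V
  | .inl a => a
  | .inr (.inl a) => a
  | .inr (.inr d) => d.snd

variable (k) in
def basisElem {n : V → V} (hn : ∀ a, G.Adj a (n a)) : BasisIndex G → ZigzagAlgebra k G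
  | .inl a => e k G a
  | .inr (.inl a) => x k (hn a).symm * x k (hn a)
  | .inr (.inr d) => x k d.adj

variable [DecidableEq V] {n : V → V} (hn : ∀ a, G.Adj a (n a))

theorem e_mul_basisElem (c : V) (i : BasisIndex G) :
    e k G c * basisElem k hn i = if c = target i then basisElem k hn i else 0 := by
  rcases i with a | a | d
  · exact e_mul_e (k := k) c a
  · show e k G c * (x k (hn a).symm * x k (hn a)) =
      if c = a then x k (hn a).symm * x k (hn a) else 0
    rw [← mul_assoc, e_mul_x, ite_mul, zero_mul]
  · exact e_mul_x c d.adj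

theorem x_mul_basisElem_mem (hG : G.Connected) (hcard : 2 < Fintype.card V) {a b : V}
    (h : G.Adj a b) (i : BasisIndex G) :
    x k h * basisElem k hn i ∈ Submodule.span k (Set.range (basisElem k hn)) := by
  have mem (j) : basisElem k hn j ∈ Submodule.span k (Set.range (basisElem k hn)) :=
    Submodule.subset_span ⟨j, rfl⟩
  rcases i with c | c | ⟨⟨c, d⟩, hcd⟩
  · rw [basisElem, x_mul_e]
    split_ifs
    exacts [mem (.inr (.inr ⟨(a, b), h⟩)), zero_mem _]
  · rw [basisElem]
    by_cases hca : c = a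
    · subst hca
      rw [x_symm_mul_x (hn c) h, ← mul_assoc, x_mul_x_symm_mul_x_eq_zero hG hcard]
      exact zero_mem _
    · rw [← mul_assoc, x_mul_x_of_ne (hn c).symm h fun h' => hca h'.1, zero_mul]
      exact zero_mem _
  · by_cases hloop : d = a ∧ b = c
    · obtain ⟨rfl, rfl⟩ := hloop
      convert mem (.inr (.inl b)) using 1
      exact x_symm_mul_x hcd (hn b)
    · rw [basisElem, x_mul_x_of_ne hcd h hloop]
      exact zero_mem _

theorem span_basisElem (hG : G.Connected) (hcard : 2 < Fintype.card V) :
    Submodule.span k (Set.range (basisElem k hn)) = ⊤ := by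
  set S := Submodule.span k (Set.range (basisElem k hn))
  have mul_mem {z : ZigzagAlgebra k G} (hz : ∀ i, z * basisElem k hn i ∈ S) :
      ∀ y ∈ S, z * y ∈ S := fun _ hy =>
    Submodule.span_le (p := S.comap (LinearMap.mulLeft k z)).2
      (by rintro _ ⟨i, rfl⟩; exact hz i) hy
  refine submodule_eq_top_of_one_mem ?_ (fun c => mul_mem fun i => ?_)
    (fun a b h => mul_mem (x_mul_basisElem_mem hn hG hcard h))
  · rw [← sum_e]
    exact Submodule.sum_mem _ fun a _ => Submodule.subset_span ⟨.inl a, rfl⟩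
  · rw [e_mul_basisElem]
    split_ifs
    exacts [Submodule.subset_span ⟨i, rfl⟩, zero_mem _]

end Spanning

open Matrix

section PartialMaps

variable {V : Type} [DecidableEq V] {G : SimpleGraph V}

/- Left multiplication by `e_a`, by `x_d` and by the loop at `a` on the basis elements, as
partial maps of the index set. -/

def eMap (a : V) (i : BasisIndex G) : Option (BasisIndex G) :=
  if target i = a then some i else none

def xMap (d : G.Dart) : BasisIndex G → Option (BasisIndex G)
  | .inl c => if c = d.fst then some (.inr (.inr d)) else none
  | .inr (.inl _) => none
  | .inr (.inr d') => if d' = d.symm then some (.inr (.inl d.snd)) else none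

def loopMap (a : V) (i : BasisIndex G) : Option (BasisIndex G) :=
  if i = .inl a then some (.inr (.inl a)) else none

theorem eMap_bind_eMap (a b : V) (i : BasisIndex G) :
    (eMap b i).bind (eMap a) = if a = b then eMap b i else none := by
  unfold eMap
  split_ifs <;> simp_all [eq_comm]

theorem xMap_bind_eMap (d : G.Dart) (i : BasisIndex G) :
    (xMap d i).bind (eMap d.snd) = xMap d i := by
  rcases i with c | c | d' <;> simp only [xMap] <;> (try split_ifs) <;> simp_all [eMap, target]

theorem eMap_bind_xMap (d : G.Dart) (i : BasisIndex G) :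
    (eMap d.fst i).bind (xMap d) = xMap d i := by
  rcases i with c | c | d' <;> simp only [eMap, target] <;> (try split_ifs) <;>
    simp_all [xMap, SimpleGraph.Dart.ext_iff, Prod.ext_iff]

theorem xMap_bind_xMap_of_ne {d₁ d₂ : G.Dart} (h : d₁.snd = d₂.fst)
    (hne : d₂.snd ≠ d₁.fst) (i : BasisIndex G) : (xMap d₁ i).bind (xMap d₂) = none := by
  have := hne.symm
  rcases i with c | c | d' <;> simp only [xMap] <;> (try split_ifs) <;>
    simp_all [xMap, SimpleGraph.Dart.ext_iff, Prod.ext_iff]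

theorem xMap_bind_xMap_symm (d : G.Dart) (i : BasisIndex G) :
    (xMap d i).bind (xMap d.symm) = loopMap d.fst i := by
  rcases i with c | c | d' <;> simp only [xMap, loopMap] <;> (try split_ifs) <;>
    simp_all [xMap, SimpleGraph.Dart.ext_iff]

theorem sum_ofPartialMap_eMap {k : Type} [CommRing k] [Fintype V] :
    ∑ a, (ofPartialMap (eMap a) : Matrix (BasisIndex G) (BasisIndex G) k) = 1 := by
  ext j i
  rw [Matrix.sum_apply, Finset.sum_eq_single (target i)
    (by simp +contextual [ofPartialMap, eMap, eq_comm]) (by simp)]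
  simp [ofPartialMap, eMap, Matrix.one_apply, eq_comm]

end PartialMaps

section Representation

variable {k : Type} [CommRing k] {V : Type} [Fintype V] [DecidableEq V] {G : SimpleGraph V}
  [DecidableRel G.Adj]

variable (k G) in
def generatorMatrix : ZigzagGen G → Matrix (BasisIndex G) (BasisIndex G) k
  | .inl a => ofPartialMap (eMap a)
  | .inr p => ofPartialMap (xMap ⟨p.1, p.2⟩)

theorem lift_generatorMatrix_zge (a : V) :
    FreeAlgebra.lift k (generatorMatrix k G) (zge k G a) = ofPartialMap (eMap a) :=
  FreeAlgebra.lift_ι_apply _ _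

theorem lift_generatorMatrix_zgx {a b : V} (h : G.Adj a b) :
    FreeAlgebra.lift k (generatorMatrix k G) (zgx k G h) = ofPartialMap (xMap ⟨(a, b), h⟩) :=
  FreeAlgebra.lift_ι_apply _ _

variable (k G) in
def leftRegular : ZigzagAlgebra k G →ₐ[k] Matrix (BasisIndex G) (BasisIndex G) k :=
  RingQuot.liftAlgHom k ⟨FreeAlgebra.lift k (generatorMatrix k G), by
    intro _ _ r
    induction r with
    | idem a =>
      simp only [map_mul, lift_generatorMatrix_zge, ofPartialMap_mul, eMap_bind_eMap, if_true]
    | orth a b h =>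
      simp only [map_mul, map_zero, lift_generatorMatrix_zge, ofPartialMap_mul, eMap_bind_eMap,
        if_neg h, ofPartialMap_none]
    | sum_one => simpa only [map_sum, map_one, lift_generatorMatrix_zge] using sum_ofPartialMap_eMap
    | target_id h =>
      rw [map_mul, lift_generatorMatrix_zge, lift_generatorMatrix_zgx, ofPartialMap_mul]
      exact congrArg ofPartialMap (funext (xMap_bind_eMap _))
    | source_id h =>
      rw [map_mul, lift_generatorMatrix_zge, lift_generatorMatrix_zgx, ofPartialMap_mul]
      exact congrArg ofPartialMap (funext (eMap_bind_xMap ⟨(_, _), h⟩))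
    | comp_zero h₁ h₂ hca =>
      rw [map_mul, map_zero, lift_generatorMatrix_zgx, lift_generatorMatrix_zgx, ofPartialMap_mul,
        ← ofPartialMap_none]
      exact congrArg ofPartialMap (funext (xMap_bind_xMap_of_ne rfl hca))
    | zigzag hab hac =>
      simp only [map_mul, lift_generatorMatrix_zgx, ofPartialMap_mul]
      exact congrArg ofPartialMap ((funext (xMap_bind_xMap_symm ⟨(_, _), hab⟩)).trans
        (funext (xMap_bind_xMap_symm ⟨(_, _), hac⟩)).symm)⟩

theorem leftRegular_e (a : V) : leftRegular k G (e k G a) = ofPartialMap (eMap a) :=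
  (RingQuot.liftAlgHom_mkAlgHom_apply _ _ _ _).trans (lift_generatorMatrix_zge a)

theorem leftRegular_x {a b : V} (h : G.Adj a b) :
    leftRegular k G (x k h) = ofPartialMap (xMap ⟨(a, b), h⟩) :=
  (RingQuot.liftAlgHom_mkAlgHom_apply _ _ _ _).trans (lift_generatorMatrix_zgx h)

variable (k G) in
/-- `Sum.elim 1 0` is the coordinate vector of `1 = ∑ a, e_a`, so `coords z` is that of
`z * 1 = z`. -/
def coords : ZigzagAlgebra k G →ₗ[k] BasisIndex G → k :=
  (mulVecBilin k k).flip (Sum.elim 1 0) ∘ₗ (leftRegular k G).toLinearMap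

theorem ofPartialMap_mulVec_elim_one_zero {f : BasisIndex G → Option (BasisIndex G)} {s : V}
    {i : BasisIndex G} (hf : ∀ a, f (.inl a) = if a = s then some i else none) :
    (ofPartialMap f : Matrix _ _ k) *ᵥ Sum.elim 1 0 = Pi.single i 1 := by
  ext j
  simp only [mulVec, dotProduct, Fintype.sum_sum_type, ofPartialMap, of_apply, hf, Sum.elim_inl,
    Sum.elim_inr, Pi.one_apply, Pi.zero_apply, mul_one, mul_zero, Finset.sum_const_zero, add_zero]
  rw [Finset.sum_eq_single s (by simp +contextual) (by simp)]
  simp [Pi.single_apply, eq_comm]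

variable {n : V → V} (hn : ∀ a, G.Adj a (n a))

theorem coords_basisElem (i : BasisIndex G) : coords k G (basisElem k hn i) = Pi.single i 1 := by
  rcases i with a | a | d
  · refine (congrArg (· *ᵥ _) (leftRegular_e a)).trans
      (ofPartialMap_mulVec_elim_one_zero (s := a) fun c => ?_)
    split_ifs with h <;> simp [eMap, target, h]
  · have loop : leftRegular k G (x k (hn a).symm * x k (hn a)) = ofPartialMap (loopMap a) := by
      rw [map_mul, leftRegular_x, leftRegular_x, ofPartialMap_mul]
      exact congrArg ofPartialMap (funext (xMap_bind_xMap_symm ⟨(a, n a), hn a⟩))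
    refine (congrArg (· *ᵥ _) loop).trans
      (ofPartialMap_mulVec_elim_one_zero (s := a) fun c => ?_)
    simp [loopMap]
  · exact (congrArg (· *ᵥ _) (leftRegular_x d.adj)).trans
      (ofPartialMap_mulVec_elim_one_zero fun _ => rfl)

theorem linearIndependent_basisElem : LinearIndependent k (basisElem k hn) := by
  apply LinearIndependent.of_comp (coords k G)
  rw [show coords k G ∘ basisElem k hn = fun i => Pi.single i 1 from funext (coords_basisElem hn)]
  exact Pi.linearIndependent_single_one _ k

variable (k) in
def basis (hG : G.Connected) (hcard : 2 < Fintype.card V) :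
    Module.Basis (BasisIndex G) k (ZigzagAlgebra k G) :=
  .mk (linearIndependent_basisElem hn) (span_basisElem hn hG hcard).ge

end Representation

end ZigzagAlgebra

/-- for a finite connected simple graph `Γ` with more than two vertices,
the zigzag algebra `A(Γ)` is a finite-dimensional `ℂ`-algebra of dimension
`2·|V| + 2·|E|`. -/
theorem zigzagAlgebra_finrank {V : Type} [Fintype V] [DecidableEq V]
    (G : SimpleGraph V) [DecidableRel G.Adj]
    (hconn : G.Connected) (hcard : 2 < Fintype.card V) :
    FiniteDimensional ℂ (ZigzagAlgebra ℂ G) ∧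
      Module.finrank ℂ (ZigzagAlgebra ℂ G) =
        2 * Fintype.card V + 2 * G.edgeFinset.card := by
  have : Nontrivial V := Fintype.one_lt_card_iff_nontrivial.1 (by omega)
  choose n hn using hconn.preconnected.exists_adj_of_nontrivial
  let b := ZigzagAlgebra.basis ℂ hn hconn hcard
  refine ⟨.of_basis b, ?_⟩
  rw [Module.finrank_eq_card_basis b, Fintype.card_sum, Fintype.card_sum,
    G.dart_card_eq_twice_card_edges]
  ring

end
end

section
/- Let a be a vertex of Γ, and consider the functors T_a from the category of left A(Γ)-modules to the category of ℂ-vector spaces, T_a(M) = e_a A(Γ) ⊗_{A(Γ)} M (equivalently M ↦ e_a M), and S_a from ℂ-vector spaces to left A(Γ)-modules, S_a(V) = A(Γ)e_a ⊗_ℂ V. Then S_a is left adjoint to T_a, and T_a is left adjoint to S_a; that is, there are adjunctions S_a ⊣ T_a and T_a ⊣ S_a. -/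
/-!
The zigzag algebra `A(Γ)` of a finite simple graph `Γ`, presented as a quotient of the
free algebra on generators `{e_a : a ∈ V} ∪ {x_{ab} : a,b adjacent}`.
-/

noncomputable section

/-! ### The functors `T_a` and `S_a` and their adjunctions -/

set_option linter.unusedSectionVars false
set_option maxHeartbeats 1000000

namespace Zig

open RingQuot

variable {V : Type} [Fintype V] [DecidableEq V] {G : SimpleGraph V} [DecidableRel G.Adj]

def E (G : SimpleGraph V) (v : V) : ZigzagAlgebra ℂ G := ZigzagAlgebra.e ℂ G v

def X {c d : V} (h : G.Adj c d) : ZigzagAlgebra ℂ G :=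
  RingQuot.mkAlgHom ℂ (ZigzagRel ℂ G) (zgx ℂ G h)

lemma E_def (v : V) : E G v = RingQuot.mkAlgHom ℂ (ZigzagRel ℂ G) (zge ℂ G v) := rfl

lemma rel {x y : FreeAlgebra ℂ (ZigzagGen G)} (w : ZigzagRel ℂ G x y) :
    RingQuot.mkAlgHom ℂ (ZigzagRel ℂ G) x = RingQuot.mkAlgHom ℂ (ZigzagRel ℂ G) y :=
  RingQuot.mkAlgHom_rel ℂ w

lemma E_mul_E (u v : V) : E G u * E G v = if u = v then E G u else 0 := by
  split_ifs with h
  · subst h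
    rw [E_def, ← map_mul]
    exact rel (ZigzagRel.idem u)
  · rw [E_def, E_def, ← map_mul, ← map_zero (RingQuot.mkAlgHom ℂ (ZigzagRel ℂ G))]
    exact rel (ZigzagRel.orth u v h)

lemma sum_E : (∑ v : V, E G v) = 1 := by
  have : (∑ v : V, E G v) = RingQuot.mkAlgHom ℂ (ZigzagRel ℂ G) (∑ v : V, zge ℂ G v) := by
    rw [map_sum]
    rfl
  rw [this, rel ZigzagRel.sum_one, map_one]

lemma E_mul_X {c d : V} (h : G.Adj c d) (v : V) :
    E G v * X h = if v = d then X h else 0 := by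
  have h1 : E G d * X h = X h := by
    rw [E_def, X, ← map_mul]; exact rel (ZigzagRel.target_id h)
  split_ifs with hv
  · subst hv; exact h1
  · rw [← h1, ← mul_assoc, E_mul_E, if_neg hv, zero_mul]

lemma X_mul_E {c d : V} (h : G.Adj c d) (v : V) :
    X h * E G v = if v = c then X h else 0 := by
  have h1 : X h * E G c = X h := by
    rw [E_def, X, ← map_mul]; exact rel (ZigzagRel.source_id h)
  split_ifs with hv
  · subst hv; exact h1
  · rw [← h1, mul_assoc, E_mul_E, if_neg (fun hh => hv hh.symm), mul_zero]

lemma X_mul_X_comp {a b c : V} (h₁ : G.Adj a b) (h₂ : G.Adj b c) (hca : c ≠ a) :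
    X h₂ * X h₁ = 0 := by
  rw [X, X, ← map_mul, ← map_zero (RingQuot.mkAlgHom ℂ (ZigzagRel ℂ G))]
  exact rel (ZigzagRel.comp_zero h₁ h₂ hca)

lemma X_mul_X_ne {a b c d : V} (h₁ : G.Adj a b) (h₂ : G.Adj c d) (hcb : c ≠ b) :
    X h₂ * X h₁ = 0 := by
  have h1 : E G b * X h₁ = X h₁ := by rw [E_mul_X, if_pos rfl]
  rw [← h1, ← mul_assoc, X_mul_E, if_neg (fun hh => hcb hh.symm), zero_mul]

lemma zigzag {a b c : V} (hab : G.Adj a b) (hac : G.Adj a c) :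
    X hab.symm * X hab = X hac.symm * X hac := by
  rw [X, X, X, X, ← map_mul, ← map_mul]; exact rel (ZigzagRel.zigzag hab hac)


section Graph

lemma exists_adj (hconn : G.Connected) (hcard : 2 < Fintype.card V) (v : V) :
    ∃ u, G.Adj v u := by
  obtain ⟨w, hw⟩ := Fintype.exists_ne_of_one_lt_card (by omega) v
  obtain ⟨p⟩ := hconn.preconnected v w
  cases p with
  | nil => exact absurd rfl hw.symm
  | cons h q => exact ⟨_, h⟩

lemma side_nbr (hconn : G.Connected) (hcard : 2 < Fintype.card V) {c d : V} (h : G.Adj c d) :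
    (∃ b, G.Adj c b ∧ b ≠ d) ∨ ∃ e, G.Adj d e ∧ e ≠ c := by
  by_contra hcon
  push_neg at hcon
  obtain ⟨h1, h2⟩ := hcon
  have hw : ∃ w : V, w ≠ c ∧ w ≠ d := by
    have hle : ({c, d} : Finset V).card ≤ 2 :=
      (Finset.card_insert_le _ _).trans (by simp)
    have hpos : 0 < ({c, d} : Finset V)ᶜ.card := by
      rw [Finset.card_compl]; omega
    obtain ⟨w, hw⟩ := Finset.card_pos.mp hpos
    simp only [Finset.mem_compl, Finset.mem_insert, Finset.mem_singleton] at hw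
    exact ⟨w, fun hh => hw (Or.inl hh), fun hh => hw (Or.inr hh)⟩
  obtain ⟨w, hwc, hwd⟩ := hw
  obtain ⟨p⟩ := hconn.preconnected c w
  have key : ∀ {x y : V} (_ : G.Walk x y), x = c ∨ x = d → y = c ∨ y = d := by
    intro x y p
    induction p with
    | nil => exact id
    | cons hadj q ih =>
      rename_i u u' u''
      intro hx
      apply ih
      rcases hx with rfl | rfl
      · exact Or.inr (h1 _ hadj)
      · exact Or.inl (h2 _ hadj)
  rcases key p (Or.inl rfl) with hh | hh
  exacts [hwc hh, hwd hh]

end Graph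

section Om

variable (hconn : G.Connected) (hcard : 2 < Fintype.card V)

def nbr (v : V) : V := (exists_adj hconn hcard v).choose

lemma nbr_adj (v : V) : G.Adj v (nbr hconn hcard v) := (exists_adj hconn hcard v).choose_spec

def om (v : V) : ZigzagAlgebra ℂ G := X (nbr_adj hconn hcard v).symm * X (nbr_adj hconn hcard v)

lemma om_eq {v b : V} (h : G.Adj v b) : om hconn hcard v = X h.symm * X h :=
  zigzag (nbr_adj hconn hcard v) h

lemma E_mul_om (v u : V) : E G v * om hconn hcard u = if v = u then om hconn hcard u else 0 := by
  rw [om, ← mul_assoc, E_mul_X (nbr_adj hconn hcard u).symm v]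
  split_ifs with hv
  · rfl
  · rw [zero_mul]

lemma om_mul_E (u v : V) : om hconn hcard u * E G v = if v = u then om hconn hcard u else 0 := by
  rw [om, mul_assoc, X_mul_E (nbr_adj hconn hcard u) v]
  split_ifs with hv
  · rfl
  · rw [mul_zero]

lemma X_mul_om {c d : V} (h : G.Adj c d) (v : V) : X h * om hconn hcard v = 0 := by
  by_cases hv : v = c
  · subst hv
    rcases side_nbr hconn hcard h with ⟨b, hb, hbd⟩ | ⟨e, he, hec⟩
    · rw [om_eq hconn hcard hb, ← mul_assoc, X_mul_X_comp hb.symm h (fun hh => hbd hh.symm),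
        zero_mul]
    · have h0 : X h * X h.symm = om hconn hcard d := by
        rw [om_eq hconn hcard h.symm]
      rw [om_eq hconn hcard h, ← mul_assoc, h0, om_eq hconn hcard he, mul_assoc,
        X_mul_X_comp h he hec, mul_zero]
  · rw [← E_mul_om hconn hcard v v |>.trans (if_pos rfl), ← mul_assoc,
      X_mul_E h v, if_neg hv, zero_mul]

lemma om_mul_X {c d : V} (h : G.Adj c d) (v : V) : om hconn hcard v * X h = 0 := by
  by_cases hv : v = d
  · subst hv
    rcases side_nbr hconn hcard h with ⟨b, hb, hbd⟩ | ⟨e, he, hec⟩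
    · have h0 : om hconn hcard v = X h * X h.symm := om_eq hconn hcard h.symm
      rw [h0, mul_assoc, ← om_eq hconn hcard h, om_eq hconn hcard hb, ← mul_assoc,
        X_mul_X_comp hb.symm h (fun hh => hbd hh.symm), zero_mul]
    · rw [om_eq hconn hcard he, mul_assoc, X_mul_X_comp h he hec, mul_zero]
  · rw [← om_mul_E hconn hcard v v |>.trans (if_pos rfl), mul_assoc,
      E_mul_X h v, if_neg hv, mul_zero]

lemma om_mul_om (u v : V) : om hconn hcard u * om hconn hcard v = 0 := by
  rw [om, mul_assoc, X_mul_om hconn hcard (nbr_adj hconn hcard u) v, mul_zero]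

end Om


section Rep

variable (G)

def tgtI : ZigzagGen G ⊕ V → V
  | .inl (.inl u) => u
  | .inl (.inr p) => p.1.2
  | .inr u => u

def genEnd : ZigzagGen G → Module.End ℂ ((ZigzagGen G ⊕ V) →₀ ℂ)
  | .inl v => Finsupp.lift _ ℂ _ (fun i => if tgtI G i = v then Finsupp.single i 1 else 0)
  | .inr p => Finsupp.lift _ ℂ _ (fun i =>
      match i with
      | .inl (.inl u) => if u = p.1.1 then Finsupp.single (.inl (.inr p)) 1 else 0
      | .inl (.inr q) =>
          if q.1.2 = p.1.1 ∧ q.1.1 = p.1.2 then Finsupp.single (.inr p.1.2) 1 else 0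
      | .inr _ => 0)

lemma lift_single {M : Type} [AddCommMonoid M] [Module ℂ M] (f : (ZigzagGen G ⊕ V) → M)
    (i : ZigzagGen G ⊕ V) (b : ℂ) :
    Finsupp.lift M ℂ (ZigzagGen G ⊕ V) f (Finsupp.single i b) = b • f i := by
  simp [Finsupp.lift_apply, Finsupp.sum_single_index]

variable {G}

lemma genEnd_inl (v : V) (i : ZigzagGen G ⊕ V) (b : ℂ) :
    genEnd G (.inl v) (Finsupp.single i b) =
      if tgtI G i = v then Finsupp.single i b else 0 := by
  rw [genEnd, lift_single]
  split_ifs <;> simp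

lemma genEnd_inr_E (p : {p : V × V // G.Adj p.1 p.2}) (u : V) (b : ℂ) :
    genEnd G (.inr p) (Finsupp.single (.inl (.inl u)) b) =
      if u = p.1.1 then Finsupp.single (.inl (.inr p)) b else 0 := by
  rw [genEnd, lift_single]
  split_ifs with h <;> simp [h]

lemma genEnd_inr_X (p q : {p : V × V // G.Adj p.1 p.2}) (b : ℂ) :
    genEnd G (.inr p) (Finsupp.single (.inl (.inr q)) b) =
      if q.1.2 = p.1.1 ∧ q.1.1 = p.1.2 then Finsupp.single (.inr p.1.2) b else 0 := by
  rw [genEnd, lift_single]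
  split_ifs with h <;> simp [h]

lemma genEnd_inr_O (p : {p : V × V // G.Adj p.1 p.2}) (u : V) (b : ℂ) :
    genEnd G (.inr p) (Finsupp.single (.inr u) b) = 0 := by
  rw [genEnd, lift_single]
  simp

lemma lift_zge (v : V) :
    FreeAlgebra.lift ℂ (genEnd G) (zge ℂ G v) = genEnd G (.inl v) :=
  FreeAlgebra.lift_ι_apply _ _

lemma lift_zgx {c d : V} (h : G.Adj c d) :
    FreeAlgebra.lift ℂ (genEnd G) (zgx ℂ G h) = genEnd G (.inr ⟨(c, d), h⟩) :=
  FreeAlgebra.lift_ι_apply _ _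

variable (G)

lemma hrel : ∀ ⦃x y : FreeAlgebra ℂ (ZigzagGen G)⦄, ZigzagRel ℂ G x y →
    FreeAlgebra.lift ℂ (genEnd G) x = FreeAlgebra.lift ℂ (genEnd G) y := by
  intro x y w
  induction w with
  | idem a =>
    simp only [map_mul, lift_zge]
    apply Finsupp.lhom_ext
    intro i b
    rw [Module.End.mul_apply, genEnd_inl]
    split_ifs with h1 <;> simp [genEnd_inl, h1]
  | orth a b h =>
    simp only [map_mul, lift_zge, map_zero]
    apply Finsupp.lhom_ext
    intro i c
    rw [Module.End.mul_apply, genEnd_inl, LinearMap.zero_apply]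
    split_ifs with h1 <;> simp [genEnd_inl, h1, h.symm]
  | sum_one =>
    simp only [map_sum, lift_zge, map_one]
    apply Finsupp.lhom_ext
    intro i b
    rw [LinearMap.sum_apply, Module.End.one_apply]
    simp [genEnd_inl, Finset.sum_ite_eq]
  | target_id h =>
    simp only [map_mul, lift_zge, lift_zgx]
    apply Finsupp.lhom_ext
    intro i b
    rcases i with (u | q) | u
    · rw [Module.End.mul_apply, genEnd_inr_E]
      split_ifs with h1 <;> simp [genEnd_inl, tgtI, genEnd_inr_E, h1]
    · rw [Module.End.mul_apply, genEnd_inr_X]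
      split_ifs with h1 <;> simp [genEnd_inl, tgtI, genEnd_inr_X, h1]
    · rw [Module.End.mul_apply, genEnd_inr_O]
      simp [genEnd_inr_O]
  | source_id h =>
    simp only [map_mul, lift_zge, lift_zgx]
    apply Finsupp.lhom_ext
    intro i b
    rcases i with (u | q) | u
    · rw [Module.End.mul_apply, genEnd_inl]
      split_ifs with h1 <;> simp_all [genEnd_inr_E, tgtI]
    · rw [Module.End.mul_apply, genEnd_inl]
      split_ifs with h1 <;> simp_all [genEnd_inr_X, tgtI]
    · rw [Module.End.mul_apply, genEnd_inl]
      split_ifs with h1 <;> simp_all [genEnd_inr_O, tgtI]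
  | comp_zero h₁ h₂ hca =>
    simp only [map_mul, lift_zgx, map_zero]
    apply Finsupp.lhom_ext
    intro i b
    rcases i with (u | q) | u
    · rw [Module.End.mul_apply, genEnd_inr_E, LinearMap.zero_apply]
      split_ifs with h1 <;> simp [genEnd_inr_X, Ne.symm hca]
    · rw [Module.End.mul_apply, genEnd_inr_X, LinearMap.zero_apply]
      split_ifs with h1 <;> simp [genEnd_inr_O]
    · rw [Module.End.mul_apply, genEnd_inr_O, LinearMap.zero_apply, map_zero]
  | zigzag hab hac =>
    simp only [map_mul, lift_zgx]
    apply Finsupp.lhom_ext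
    intro i b
    rcases i with (u | q) | u
    · rw [Module.End.mul_apply, genEnd_inr_E, Module.End.mul_apply, genEnd_inr_E]
      split_ifs with h1 <;> simp [genEnd_inr_X]
    · rw [Module.End.mul_apply, genEnd_inr_X, Module.End.mul_apply, genEnd_inr_X]
      split_ifs with h1 h2 <;> simp [genEnd_inr_O]
    · rw [Module.End.mul_apply, genEnd_inr_O, Module.End.mul_apply, genEnd_inr_O]
      simp

def ρ : ZigzagAlgebra ℂ G →ₐ[ℂ] Module.End ℂ ((ZigzagGen G ⊕ V) →₀ ℂ) :=
  RingQuot.liftAlgHom ℂ (s := ZigzagRel ℂ G) ⟨FreeAlgebra.lift ℂ (genEnd G), hrel G⟩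

lemma ρ_E (v : V) : ρ G (E G v) = genEnd G (.inl v) := by
  rw [E_def, ρ, RingQuot.liftAlgHom_mkAlgHom_apply]
  exact FreeAlgebra.lift_ι_apply _ _

lemma ρ_X {c d : V} (h : G.Adj c d) : ρ G (X h) = genEnd G (.inr ⟨(c, d), h⟩) := by
  rw [X, ρ, RingQuot.liftAlgHom_mkAlgHom_apply]
  exact FreeAlgebra.lift_ι_apply _ _

def onev : (ZigzagGen G ⊕ V) →₀ ℂ := ∑ v : V, Finsupp.single (.inl (.inl v)) 1

def τfun : ZigzagGen G ⊕ V → ℂ := fun i => match i with | .inr _ => 1 | _ => 0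

def τ : ZigzagAlgebra ℂ G →ₗ[ℂ] ℂ where
  toFun y := Finsupp.lift ℂ ℂ (ZigzagGen G ⊕ V) (τfun G) (ρ G y (onev G))
  map_add' x y := by simp [map_add]
  map_smul' c x := by simp [map_smul]

variable {G}

lemma τ_apply (y : ZigzagAlgebra ℂ G) :
    τ G y = Finsupp.lift ℂ ℂ (ZigzagGen G ⊕ V) (τfun G) (ρ G y (onev G)) := rfl

lemma τfun_E (v : V) : τfun G (.inl (.inl v)) = 0 := rfl
lemma τfun_X (q : {p : V × V // G.Adj p.1 p.2}) : τfun G (.inl (.inr q)) = 0 := rfl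
lemma τfun_O (v : V) : τfun G (.inr v) = 1 := rfl

lemma genEnd_E_onev (v : V) :
    genEnd G (.inl v) (onev G) = Finsupp.single (.inl (.inl v)) 1 := by
  rw [onev, map_sum, Finset.sum_eq_single v]
  · simp [genEnd_inl, tgtI]
  · intro u _ hu
    simp [genEnd_inl, tgtI, hu]
  · simp

lemma genEnd_X_onev (p : {p : V × V // G.Adj p.1 p.2}) :
    genEnd G (.inr p) (onev G) = Finsupp.single (.inl (.inr p)) 1 := by
  rw [onev, map_sum, Finset.sum_eq_single p.1.1]
  · simp [genEnd_inr_E]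
  · intro u _ hu
    simp [genEnd_inr_E, hu]
  · simp

lemma τ_E (v : V) : τ G (E G v) = 0 := by
  rw [τ_apply, ρ_E, genEnd_E_onev, lift_single, τfun_E, smul_zero]

lemma τ_X {c d : V} (h : G.Adj c d) : τ G (X h) = 0 := by
  rw [τ_apply, ρ_X, genEnd_X_onev, lift_single, τfun_X, smul_zero]

lemma τ_XX {v b : V} (h : G.Adj v b) : τ G (X h.symm * X h) = 1 := by
  rw [τ_apply, map_mul, Module.End.mul_apply, ρ_X, ρ_X, genEnd_X_onev, genEnd_inr_X]
  rw [if_pos ⟨rfl, rfl⟩, lift_single, τfun_O, smul_eq_mul, mul_one]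

lemma τ_om (hconn : G.Connected) (hcard : 2 < Fintype.card V) (v : V) :
    τ G (om hconn hcard v) = 1 := by
  rw [om]
  exact τ_XX (nbr_adj hconn hcard v)

end Rep


section Span

variable (hconn : G.Connected) (hcard : 2 < Fintype.card V)

def bas (a : V) : Set (ZigzagAlgebra ℂ G) :=
  insert (E G a) (insert (om hconn hcard a) {y | ∃ b, ∃ h : G.Adj a b, y = X h})

lemma E_mem_bas (a : V) : E G a ∈ bas hconn hcard a := Set.mem_insert _ _
lemma om_mem_bas (a : V) : om hconn hcard a ∈ bas hconn hcard a :=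
  Set.mem_insert_of_mem _ (Set.mem_insert _ _)
lemma X_mem_bas {a b : V} (h : G.Adj a b) : X h ∈ bas hconn hcard a :=
  Set.mem_insert_of_mem _ (Set.mem_insert_of_mem _ ⟨b, h, rfl⟩)

lemma gen_mul_bas (a : V) (g : ZigzagGen G) (x : ZigzagAlgebra ℂ G)
    (hx : x ∈ bas hconn hcard a) :
    RingQuot.mkAlgHom ℂ (ZigzagRel ℂ G) (FreeAlgebra.ι ℂ g) * x ∈
      Submodule.span ℂ (bas hconn hcard a) := by
  rcases g with v | ⟨⟨c, d⟩, hcd⟩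
  · have hEv : RingQuot.mkAlgHom ℂ (ZigzagRel ℂ G) (FreeAlgebra.ι ℂ (Sum.inl v)) = E G v := rfl
    rw [hEv]
    rcases hx with rfl | rfl | ⟨b, h, rfl⟩
    · rw [E_mul_E]
      split_ifs with hva
      · subst hva
        exact Submodule.subset_span (E_mem_bas hconn hcard v)
      · exact Submodule.zero_mem _
    · rw [E_mul_om]
      split_ifs
      · exact Submodule.subset_span (om_mem_bas hconn hcard a)
      · exact Submodule.zero_mem _
    · rw [E_mul_X]
      split_ifs
      · exact Submodule.subset_span (X_mem_bas hconn hcard h)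
      · exact Submodule.zero_mem _
  · have hXv : RingQuot.mkAlgHom ℂ (ZigzagRel ℂ G) (FreeAlgebra.ι ℂ (Sum.inr ⟨(c, d), hcd⟩)) =
        X hcd := rfl
    rw [hXv]
    rcases hx with rfl | rfl | ⟨b, h, rfl⟩
    · rw [X_mul_E]
      split_ifs with hac
      · subst hac
        exact Submodule.subset_span (X_mem_bas hconn hcard hcd)
      · exact Submodule.zero_mem _
    · rw [X_mul_om]
      exact Submodule.zero_mem _
    · by_cases hcb : c = b
      · subst hcb
        by_cases hda : d = a
        · have key : X hcd * X h = om hconn hcard a := by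
            subst hda
            exact (om_eq hconn hcard h).symm
          rw [key]
          exact Submodule.subset_span (om_mem_bas hconn hcard a)
        · rw [X_mul_X_comp h hcd hda]
          exact Submodule.zero_mem _
      · rw [X_mul_X_ne h hcd hcb]
        exact Submodule.zero_mem _

lemma mul_mem_span_bas (a : V) (r x : ZigzagAlgebra ℂ G)
    (hx : x ∈ Submodule.span ℂ (bas hconn hcard a)) :
    r * x ∈ Submodule.span ℂ (bas hconn hcard a) := by
  obtain ⟨p, rfl⟩ := RingQuot.mkAlgHom_surjective ℂ (ZigzagRel ℂ G) r
  induction p using FreeAlgebra.induction generalizing x with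
  | grade0 c =>
    rw [AlgHom.commutes, ← Algebra.smul_def]
    exact Submodule.smul_mem _ _ hx
  | grade1 g =>
    induction hx using Submodule.span_induction with
    | mem y hy => exact gen_mul_bas hconn hcard a g y hy
    | zero => rw [mul_zero]; exact Submodule.zero_mem _
    | add y z _ _ hy hz => rw [mul_add]; exact Submodule.add_mem _ hy hz
    | smul c y _ hy => rw [mul_smul_comm]; exact Submodule.smul_mem _ _ hy
  | mul p q hp hq =>
    rw [map_mul, mul_assoc]
    exact hp _ (hq _ hx)
  | add p q hp hq =>
    rw [map_add, add_mul]
    exact Submodule.add_mem _ (hp _ hx) (hq _ hx)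

lemma Pleft_subset_span (a : V) (x : ZigzagAlgebra ℂ G)
    (hx : x ∈ Submodule.span (ZigzagAlgebra ℂ G) {ZigzagAlgebra.e ℂ G a}) :
    x ∈ Submodule.span ℂ (bas hconn hcard a) := by
  rw [Submodule.mem_span_singleton] at hx
  obtain ⟨r, rfl⟩ := hx
  rw [smul_eq_mul]
  exact mul_mem_span_bas hconn hcard a r _
    (Submodule.subset_span (E_mem_bas hconn hcard a))

end Span

section Span2

/-- `x_{ab}` as an element, `0` if not adjacent. -/
def xv (G : SimpleGraph V) [DecidableRel G.Adj] (a b : V) : ZigzagAlgebra ℂ G :=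
  if h : G.Adj a b then X h else 0

/-- `x_{ba}` as an element, `0` if not adjacent. -/
def xvr (G : SimpleGraph V) [DecidableRel G.Adj] (a b : V) : ZigzagAlgebra ℂ G :=
  if h : G.Adj a b then X h.symm else 0

variable (hconn : G.Connected) (hcard : 2 < Fintype.card V)

lemma recon (a : V) (z : ZigzagAlgebra ℂ G)
    (hz : z ∈ Submodule.span ℂ (bas hconn hcard a)) :
    τ G (om hconn hcard a * z) • E G a
      + (∑ b : V, τ G (xvr G a b * z) • xv G a b)
      + τ G (E G a * z) • om hconn hcard a = z := by
  induction hz using Submodule.span_induction with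
  | mem y hy =>
    rcases hy with rfl | rfl | ⟨b, h, rfl⟩
    · rw [om_mul_E hconn hcard a a, if_pos rfl, τ_om]
      rw [E_mul_E, if_pos rfl, τ_E]
      have hsum : ∀ b : V, τ G (xvr G a b * E G a) • xv G a b = 0 := by
        intro b
        rw [xvr]
        split_ifs with h
        · rw [X_mul_E, if_neg (G.ne_of_adj h), map_zero, zero_smul]
        · rw [zero_mul, map_zero, zero_smul]
      rw [Finset.sum_congr rfl (fun b _ => hsum b)]
      simp
    · rw [om_mul_om, map_zero, E_mul_om hconn hcard a a, if_pos rfl,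
        τ_om]
      have hsum : ∀ b : V, τ G (xvr G a b * om hconn hcard a) • xv G a b = 0 := by
        intro b
        rw [xvr]
        split_ifs with h
        · rw [X_mul_om, map_zero, zero_smul]
        · rw [zero_mul, map_zero, zero_smul]
      rw [Finset.sum_congr rfl (fun b _ => hsum b)]
      simp
    · rw [om_mul_X, map_zero, E_mul_X, if_neg (G.ne_of_adj h), map_zero]
      have hsum : (∑ b' : V, τ G (xvr G a b' * X h) • xv G a b') = X h := by
        rw [Finset.sum_eq_single b]
        · rw [xvr, dif_pos h, xv, dif_pos h]
          have : X h.symm * X h = om hconn hcard a := (om_eq hconn hcard h).symm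
          rw [this, τ_om, one_smul]
        · intro b' _ hb'
          rw [xvr]
          split_ifs with h'
          · rw [X_mul_X_ne h h'.symm hb', map_zero, zero_smul]
          · rw [zero_mul, map_zero, zero_smul]
        · simp
      rw [hsum]
      simp
  | zero => simp
  | add y z _ _ hy hz =>
    conv_rhs => rw [← hy, ← hz]
    simp only [mul_add, map_add, add_smul, Finset.sum_add_distrib]
    abel
  | smul c y _ hy =>
    conv_rhs => rw [← hy]
    simp only [mul_smul_comm, map_smul, smul_eq_mul, mul_smul, smul_add, Finset.smul_sum]

end Span2

end Zig


open CategoryTheory TensorProduct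

set_option maxHeartbeats 1000000
set_option synthInstance.maxHeartbeats 400000
set_option maxSynthPendingDepth 3

section Functors

variable {V : Type} [Fintype V] (G : SimpleGraph V) (a : V)

/-- Restriction of scalars along `ℂ → A(Γ)`. -/
abbrev resC : ModuleCat (ZigzagAlgebra ℂ G) ⥤ ModuleCat ℂ :=
  ModuleCat.restrictScalars (algebraMap ℂ (ZigzagAlgebra ℂ G))

/-- The `ℂ`-linear endomorphism `m ↦ e_a • m` of an `A(Γ)`-module `M`
(restricted to `ℂ`), whose range is the subspace `e_a M`. -/
def eAction (M : ModuleCat (ZigzagAlgebra ℂ G)) :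
    (resC G).obj M →ₗ[ℂ] (resC G).obj M where
  toFun m := (ZigzagAlgebra.e ℂ G a • m : M)
  map_add' m n := smul_add _ m n
  map_smul' c m := by
    show ZigzagAlgebra.e ℂ G a • (algebraMap ℂ (ZigzagAlgebra ℂ G) c • m)
        = algebraMap ℂ (ZigzagAlgebra ℂ G) c • (ZigzagAlgebra.e ℂ G a • m)
    rw [← mul_smul, ← mul_smul, Algebra.commutes]

/-- The functor `T_a : A(Γ)-Mod ⥤ ℂ-Vect`, `M ↦ e_a M ( ≅ e_a A(Γ) ⊗_{A(Γ)} M )`. -/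
def functorT : ModuleCat (ZigzagAlgebra ℂ G) ⥤ ModuleCat ℂ where
  obj M := ModuleCat.of ℂ (LinearMap.range (eAction G a M))
  map {M N} f :=
    ModuleCat.ofHom (LinearMap.restrict ((resC G).map f).hom
      (q := LinearMap.range (eAction G a N))
      (by
        rintro x ⟨m, rfl⟩
        exact ⟨f.hom m, (map_smul f.hom (ZigzagAlgebra.e ℂ G a) m).symm⟩))
  map_id M := by
    apply ModuleCat.hom_ext
    apply LinearMap.ext; intro x
    apply Subtype.ext
    rfl
  map_comp f g := by
    apply ModuleCat.hom_ext
    apply LinearMap.ext; intro x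
    apply Subtype.ext
    rfl

/-- The left ideal `P_a = A(Γ)e_a`, as a left `A(Γ)`-submodule of `A(Γ)`. -/
def Pleft : Submodule (ZigzagAlgebra ℂ G) (ZigzagAlgebra ℂ G) :=
  Submodule.span (ZigzagAlgebra ℂ G) {ZigzagAlgebra.e ℂ G a}

instance : SMulCommClass ℂ (ZigzagAlgebra ℂ G) (Pleft G a) :=
  ⟨fun c x m => Subtype.ext (smul_comm c x (m : ZigzagAlgebra ℂ G))⟩

/-- The functor `S_a : ℂ-Vect ⥤ A(Γ)-Mod`, `W ↦ P_a ⊗_ℂ W = A(Γ)e_a ⊗_ℂ W`. -/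
def functorS : ModuleCat ℂ ⥤ ModuleCat (ZigzagAlgebra ℂ G) where
  obj W := ModuleCat.of (ZigzagAlgebra ℂ G) (Pleft G a ⊗[ℂ] W)
  map {W X} f := ModuleCat.ofHom (TensorProduct.AlgebraTensorModule.map LinearMap.id f.hom)
  map_id W := ModuleCat.hom_ext TensorProduct.AlgebraTensorModule.map_id
  map_comp f g := by
    apply ModuleCat.hom_ext
    refine Eq.trans ?_ (TensorProduct.AlgebraTensorModule.map_comp LinearMap.id LinearMap.id g.hom f.hom)
    rw [LinearMap.comp_id]
    rfl

end Functors


namespace Zig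

section Adj1

variable {V : Type} [Fintype V] [DecidableEq V] (G : SimpleGraph V) [DecidableRel G.Adj] (a : V)

lemma e_idem : ZigzagAlgebra.e ℂ G a * ZigzagAlgebra.e ℂ G a = ZigzagAlgebra.e ℂ G a := by
  have := E_mul_E (G := G) a a
  rw [if_pos rfl] at this
  exact this

lemma mem_TM_iff {M : ModuleCat (ZigzagAlgebra ℂ G)} {x : (resC G).obj M} :
    x ∈ LinearMap.range (eAction G a M) ↔ ZigzagAlgebra.e ℂ G a • x = x := by
  constructor
  · rintro ⟨m, rfl⟩
    show ZigzagAlgebra.e ℂ G a • (ZigzagAlgebra.e ℂ G a • m) = _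
    rw [← mul_smul, e_idem]
    rfl
  · intro h
    exact ⟨x, h⟩

def eP : Pleft G a := ⟨ZigzagAlgebra.e ℂ G a, Submodule.mem_span_singleton_self _⟩

lemma mem_Pleft {x : ZigzagAlgebra ℂ G} (hx : x * ZigzagAlgebra.e ℂ G a = x) :
    x ∈ Pleft G a :=
  Submodule.mem_span_singleton.2 ⟨x, by rw [smul_eq_mul, hx]⟩

lemma Pleft_mul_e (x : Pleft G a) :
    (x : ZigzagAlgebra ℂ G) * ZigzagAlgebra.e ℂ G a = (x : ZigzagAlgebra ℂ G) := by
  obtain ⟨r, hr⟩ := Submodule.mem_span_singleton.1 x.2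
  rw [← hr, smul_eq_mul, mul_assoc, e_idem]

def unit1 (W : ModuleCat ℂ) : W ⟶ (functorS G a ⋙ functorT G a).obj W := ModuleCat.ofHom
 ({toFun w := ⟨eP G a ⊗ₜ[ℂ] w, (mem_TM_iff G a).2 (by
    show ZigzagAlgebra.e ℂ G a • (eP G a ⊗ₜ[ℂ] w) = _
    rw [TensorProduct.smul_tmul']
    congr 1
    exact Subtype.ext (e_idem G a))⟩
   map_add' w w' := Subtype.ext (TensorProduct.tmul_add _ _ _)
   map_smul' c w := by
    apply Subtype.ext
    show eP G a ⊗ₜ[ℂ] (c • w) = algebraMap ℂ (ZigzagAlgebra ℂ G) c • (eP G a ⊗ₜ[ℂ] w)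
    rw [TensorProduct.tmul_smul, algebraMap_smul]} :
    W →ₗ[ℂ] LinearMap.range (eAction G a ((functorS G a).obj W)))

def counit1F (M : ModuleCat (ZigzagAlgebra ℂ G)) :
    ↥(Pleft G a) →ₗ[ℂ] ↥(LinearMap.range (eAction G a M)) →ₗ[ℂ] (resC G).obj M where
  toFun x :=
    { toFun := fun t => (x : ZigzagAlgebra ℂ G) • t.1
      map_add' := fun t t' => by
        show (x : ZigzagAlgebra ℂ G) • (t.1 + t'.1) = _
        rw [smul_add]
      map_smul' := fun c t => by
        show (x : ZigzagAlgebra ℂ G) • (algebraMap ℂ (ZigzagAlgebra ℂ G) c • t.1) =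
          algebraMap ℂ (ZigzagAlgebra ℂ G) c • ((x : ZigzagAlgebra ℂ G) • t.1)
        rw [← mul_smul, ← mul_smul, Algebra.commutes] }
  map_add' x y := by
    apply LinearMap.ext
    intro t
    show ((x : ZigzagAlgebra ℂ G) + y) • t.1 = _
    rw [add_smul]
    rfl
  map_smul' c x := by
    apply LinearMap.ext
    intro t
    show ((c • x : Pleft G a) : ZigzagAlgebra ℂ G) • t.1 =
      algebraMap ℂ (ZigzagAlgebra ℂ G) c • ((x : ZigzagAlgebra ℂ G) • t.1)
    rw [Submodule.coe_smul_of_tower, Algebra.smul_def, mul_smul]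

def counit1 (M : ModuleCat (ZigzagAlgebra ℂ G)) :
    (functorT G a ⋙ functorS G a).obj M ⟶ M := ModuleCat.ofHom
 ({toFun := TensorProduct.lift (counit1F G a M)
   map_add' := map_add _
   map_smul' r t := by
    show TensorProduct.lift (counit1F G a M) (r • t) =
      r • TensorProduct.lift (counit1F G a M) t
    induction t using TensorProduct.induction_on with
    | zero => rw [smul_zero, map_zero, smul_zero]
    | tmul x m' =>
      rw [TensorProduct.smul_tmul']
      rw [TensorProduct.lift.tmul, TensorProduct.lift.tmul]
      show ((r • x : Pleft G a) : ZigzagAlgebra ℂ G) • m'.1 = r • _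
      rw [Submodule.coe_smul, smul_eq_mul, mul_smul]
      rfl
    | add t t' ht ht' =>
      rw [smul_add, map_add, map_add, ht, ht', smul_add]} :
    (Pleft G a ⊗[ℂ] LinearMap.range (eAction G a M)) →ₗ[ZigzagAlgebra ℂ G] M)

lemma counit1_tmul (M : ModuleCat (ZigzagAlgebra ℂ G)) (x : Pleft G a)
    (m' : (functorT G a).obj M) :
    (counit1 G a M).hom (x ⊗ₜ[ℂ] m') = (x : ZigzagAlgebra ℂ G) • m'.1 := rfl

def adj1 : functorS G a ⊣ functorT G a :=
  Adjunction.mkOfUnitCounit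
    { unit :=
        { app := unit1 G a
          naturality := by
            intro W W' f
            apply ModuleCat.hom_ext
            apply LinearMap.ext
            intro w
            apply Subtype.ext
            show (eP G a) ⊗ₜ[ℂ] (f.hom w) =
              (TensorProduct.AlgebraTensorModule.map LinearMap.id f.hom) (eP G a ⊗ₜ[ℂ] w)
            rw [TensorProduct.AlgebraTensorModule.map_tmul]
            rfl }
      counit :=
        { app := counit1 G a
          naturality := by
            intro M N f
            apply ModuleCat.hom_ext
            apply LinearMap.ext
            intro t
            show (counit1 G a N).hom ((TensorProduct.AlgebraTensorModule.map LinearMap.id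
              ((functorT G a).map f).hom) t) = f.hom ((counit1 G a M).hom t)
            induction t using TensorProduct.induction_on with
            | zero =>
              simp
              exact (counit1 G a N).hom.map_zero.trans
                ((congrArg f.hom (counit1 G a M).hom.map_zero).trans f.hom.map_zero).symm
            | tmul x m' =>
              rw [TensorProduct.AlgebraTensorModule.map_tmul, counit1_tmul, counit1_tmul]
              show (x : ZigzagAlgebra ℂ G) • (f.hom m'.1) = f.hom _
              exact (map_smul f.hom _ _).symm
            | add t t' ht ht' =>
              simp only [map_add]
              exact ((counit1 G a N).hom.map_add _ _).trans ((congrArg₂ (· + ·) ht ht').trans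
                ((f.hom.map_add _ _).symm.trans
                  (congrArg f.hom ((counit1 G a M).hom.map_add t t').symm))) }
      left_triangle := by
        apply NatTrans.ext
        funext W
        apply ModuleCat.hom_ext
        apply LinearMap.ext
        intro t
        show (counit1 G a ((functorS G a).obj W)).hom
          ((TensorProduct.AlgebraTensorModule.map LinearMap.id (unit1 G a W).hom) t) = t
        induction t using TensorProduct.induction_on with
        | zero =>
          simp
          exact (counit1 G a _).hom.map_zero
        | tmul x w =>
          rw [TensorProduct.AlgebraTensorModule.map_tmul, counit1_tmul]
          show (x : ZigzagAlgebra ℂ G) • ((eP G a) ⊗ₜ[ℂ] w) = x ⊗ₜ[ℂ] w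
          rw [TensorProduct.smul_tmul']
          congr 1
          exact Subtype.ext (Pleft_mul_e G a x)
        | add t t' ht ht' =>
          rw [map_add]
          exact ((counit1 G a _).hom.map_add _ _).trans (congrArg₂ (· + ·) ht ht')
      right_triangle := by
        apply NatTrans.ext
        funext M
        apply ModuleCat.hom_ext
        apply LinearMap.ext
        intro m'
        apply Subtype.ext
        show (counit1 G a M).hom (eP G a ⊗ₜ[ℂ] m') = m'.1
        rw [counit1_tmul]
        exact (mem_TM_iff G a).1 m'.2 }

end Adj1


section Adj2

variable {V : Type} [Fintype V] [DecidableEq V] {G : SimpleGraph V} [DecidableRel G.Adj]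
variable (hconn : G.Connected) (hcard : 2 < Fintype.card V) (a : V)

lemma e_mul_xv (v b : V) : E G v * xv G a b = if v = b then xv G a b else 0 := by
  rw [xv]
  split_ifs with h hv hv
  · rw [E_mul_X h, if_pos hv]
  · rw [E_mul_X h, if_neg hv]
  · rw [mul_zero]
  · rw [mul_zero]

lemma xv_mul_e (b v : V) : xv G a b * E G v = if v = a then xv G a b else 0 := by
  rw [xv]
  split_ifs with h hv hv
  · rw [X_mul_E h, if_pos hv]
  · rw [X_mul_E h, if_neg hv]
  · rw [zero_mul]
  · rw [zero_mul]

lemma e_mul_xvr (v b : V) : E G v * xvr G a b = if v = a then xvr G a b else 0 := by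
  rw [xvr]
  split_ifs with h hv hv
  · rw [E_mul_X h.symm, if_pos hv]
  · rw [E_mul_X h.symm, if_neg hv]
  · rw [mul_zero]
  · rw [mul_zero]

lemma xvr_mul_e (b v : V) : xvr G a b * E G v = if v = b then xvr G a b else 0 := by
  rw [xvr]
  split_ifs with h hv hv
  · rw [X_mul_E h.symm, if_pos hv]
  · rw [X_mul_E h.symm, if_neg hv]
  · rw [zero_mul]
  · rw [zero_mul]

lemma om_mul_xv (b : V) : om hconn hcard a * xv G a b = 0 := by
  rw [xv]
  split_ifs with h
  · exact om_mul_X hconn hcard h a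
  · rw [mul_zero]

lemma xv_mul_om (b v : V) : xv G a b * om hconn hcard v = 0 := by
  rw [xv]
  split_ifs with h
  · exact X_mul_om hconn hcard h v
  · rw [zero_mul]

lemma om_mul_xvr (v b : V) : om hconn hcard v * xvr G a b = 0 := by
  rw [xvr]
  split_ifs with h
  · exact om_mul_X hconn hcard h.symm v
  · rw [mul_zero]

lemma xvr_mul_om (b v : V) : xvr G a b * om hconn hcard v = 0 := by
  rw [xvr]
  split_ifs with h
  · exact X_mul_om hconn hcard h.symm v
  · rw [zero_mul]

lemma xvr_mul_X {c d : V} (hcd : G.Adj c d) (b : V) :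
    xvr G a b * X hcd = if b = d ∧ a = c then om hconn hcard a else 0 := by
  rw [xvr]
  split_ifs with h hc hc
  · obtain ⟨hbd, hac⟩ := hc
    have key : X h.symm * X hcd = om hconn hcard a := by
      subst hbd; subst hac
      exact (om_eq hconn hcard h).symm
    exact key
  · by_cases hbd : b = d
    · have hac : a ≠ c := fun hh => hc ⟨hbd, hh⟩
      have key : X h.symm * X hcd = 0 := by
        subst hbd
        exact X_mul_X_comp hcd h.symm hac
      exact key
    · exact X_mul_X_ne hcd h.symm hbd
  · exact absurd (by rw [hc.2, hc.1]; exact hcd) h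
  · rw [zero_mul]

lemma X_mul_xv {c d : V} (hcd : G.Adj c d) (b : V) :
    X hcd * xv G a b = if b = c ∧ d = a then om hconn hcard a else 0 := by
  rw [xv]
  split_ifs with h hc hc
  · obtain ⟨hbc, hda⟩ := hc
    have key : X hcd * X h = om hconn hcard a := by
      subst hbc; subst hda
      exact (om_eq hconn hcard h).symm
    exact key
  · by_cases hbc : b = c
    · have hda : d ≠ a := fun hh => hc ⟨hbc, hh⟩
      have key : X hcd * X h = 0 := by
        subst hbc
        exact X_mul_X_comp h hcd hda
      exact key
    · exact X_mul_X_ne h hcd (fun hh => hbc hh.symm)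
  · exact absurd (by rw [hc.1, ← hc.2]; exact hcd.symm) h
  · rw [mul_zero]


lemma e_mul_om_self : E G a * om hconn hcard a = om hconn hcard a := by
  rw [E_mul_om]; exact if_pos rfl

lemma om_mul_e_self : om hconn hcard a * E G a = om hconn hcard a := by
  rw [om_mul_E]; exact if_pos rfl

lemma e_idem0 : E G a * E G a = E G a := by
  have := E_mul_E (G := G) a a
  simpa using this

lemma e_mul_xvr_self (b : V) : E G a * xvr G a b = xvr G a b := by
  rw [e_mul_xvr]; exact if_pos rfl

def omP : Pleft G a := ⟨om hconn hcard a, mem_Pleft G a (om_mul_e_self hconn hcard a)⟩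

lemma om_mul_e_self' : om hconn hcard a * ZigzagAlgebra.e ℂ G a = om hconn hcard a :=
  om_mul_e_self hconn hcard a

def xvP (G : SimpleGraph V) [DecidableRel G.Adj] (a b : V) : Pleft G a :=
  ⟨xv G a b, mem_Pleft G a (by
    show xv G a b * E G a = xv G a b
    rw [xv_mul_e]; exact if_pos rfl)⟩

lemma eP_val : ((eP G a : Pleft G a) : ZigzagAlgebra ℂ G) = E G a := rfl
lemma omP_val : ((omP hconn hcard a : Pleft G a) : ZigzagAlgebra ℂ G) = om hconn hcard a := rfl
lemma xvP_val (b : V) : ((xvP G a b : Pleft G a) : ZigzagAlgebra ℂ G) = xv G a b := rfl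

variable (G) in
def actL (r : ZigzagAlgebra ℂ G) (M : ModuleCat (ZigzagAlgebra ℂ G)) :
    (resC G).obj M →ₗ[ℂ] (resC G).obj M where
  toFun m := (r • m : M)
  map_add' m n := smul_add _ m n
  map_smul' c m := by
    show r • (algebraMap ℂ (ZigzagAlgebra ℂ G) c • m)
        = algebraMap ℂ (ZigzagAlgebra ℂ G) c • (r • m)
    rw [← mul_smul, ← mul_smul, Algebra.commutes]

variable (G) in
def toTM (M : ModuleCat (ZigzagAlgebra ℂ G)) (r : ZigzagAlgebra ℂ G)
    (hr : E G a * r = r) :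
    (resC G).obj M →ₗ[ℂ] ↥(LinearMap.range (eAction G a M)) :=
  LinearMap.codRestrict _ (actL G r M) (fun m => (mem_TM_iff G a).2 (by
    show E G a • (r • m) = r • m
    rw [← mul_smul, hr]))

lemma toTM_val (M : ModuleCat (ZigzagAlgebra ℂ G)) (r : ZigzagAlgebra ℂ G)
    (hr : E G a * r = r) (m : (resC G).obj M) :
    (toTM G a M r hr m).1 = (r • m : M) := rfl

/-- The unit of the adjunction `T ⊣ S`, as a `ℂ`-linear map. -/
def η0L (M : ModuleCat (ZigzagAlgebra ℂ G)) :
    (resC G).obj M →ₗ[ℂ] (↥(Pleft G a) ⊗[ℂ] ↥(LinearMap.range (eAction G a M))) :=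
  ((TensorProduct.mk ℂ _ _ (eP G a)).comp
      (toTM G a M (om hconn hcard a) (e_mul_om_self hconn hcard a)))
    + (∑ b : V, (TensorProduct.mk ℂ _ _ (xvP G a b)).comp
        (toTM G a M (xvr G a b) (e_mul_xvr_self a b)))
    + ((TensorProduct.mk ℂ _ _ (omP hconn hcard a)).comp
        (toTM G a M (E G a) (e_idem0 a)))

lemma η0L_apply (M : ModuleCat (ZigzagAlgebra ℂ G)) (m : (resC G).obj M) :
    η0L hconn hcard a M m =
      eP G a ⊗ₜ[ℂ] toTM G a M (om hconn hcard a) (e_mul_om_self hconn hcard a) m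
      + (∑ b : V, xvP G a b ⊗ₜ[ℂ] toTM G a M (xvr G a b) (e_mul_xvr_self a b) m)
      + omP hconn hcard a ⊗ₜ[ℂ] toTM G a M (E G a) (e_idem0 a) m := by
  simp [η0L, LinearMap.sum_apply, TensorProduct.mk_apply]

lemma tmul_zero_left {M : ModuleCat (ZigzagAlgebra ℂ G)} (x : Pleft G a)
    (hx : (x : ZigzagAlgebra ℂ G) = 0) (t : ↥(LinearMap.range (eAction G a M))) :
    x ⊗ₜ[ℂ] t = (0 : ↥(Pleft G a) ⊗[ℂ] ↥(LinearMap.range (eAction G a M))) := by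
  have : x = 0 := Subtype.ext hx
  rw [this, TensorProduct.zero_tmul]

lemma tmul_zero_right {M : ModuleCat (ZigzagAlgebra ℂ G)} (x : Pleft G a)
    (t : ↥(LinearMap.range (eAction G a M))) (ht : t.1 = 0) :
    x ⊗ₜ[ℂ] t = (0 : ↥(Pleft G a) ⊗[ℂ] ↥(LinearMap.range (eAction G a M))) := by
  have : t = 0 := Subtype.ext ht
  rw [this, TensorProduct.tmul_zero]

lemma tmul_congr {M : ModuleCat (ZigzagAlgebra ℂ G)} {x x' : Pleft G a}
    {t t' : ↥(LinearMap.range (eAction G a M))}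
    (hx : (x : ZigzagAlgebra ℂ G) = x') (ht : t.1 = t'.1) :
    x ⊗ₜ[ℂ] t = (x' ⊗ₜ[ℂ] t' : ↥(Pleft G a) ⊗[ℂ] ↥(LinearMap.range (eAction G a M))) := by
  rw [Subtype.ext hx, Subtype.ext ht]

lemma smulP_val (r : ZigzagAlgebra ℂ G) (x : Pleft G a) :
    ((r • x : Pleft G a) : ZigzagAlgebra ℂ G) = r * (x : ZigzagAlgebra ℂ G) := rfl

lemma η0_smul (M : ModuleCat (ZigzagAlgebra ℂ G)) (r : ZigzagAlgebra ℂ G)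
    (m : (resC G).obj M) :
    η0L hconn hcard a M (r • m) = r • η0L hconn hcard a M m := by
  obtain ⟨p, rfl⟩ := RingQuot.mkAlgHom_surjective ℂ (ZigzagRel ℂ G) r
  induction p using FreeAlgebra.induction generalizing m with
  | grade0 c =>
    rw [AlgHom.commutes]
    have h1 : (algebraMap ℂ (ZigzagAlgebra ℂ G) c • m : M) = (c • m : (resC G).obj M) := rfl
    rw [h1, map_smul, algebraMap_smul]
  | add p q hp hq =>
    rw [map_add, add_smul, LinearMap.map_add, hp, hq, add_smul]
  | mul p q hp hq =>
    rw [map_mul, mul_smul, hp, hq, mul_smul]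
  | grade1 g =>
    rcases g with v | ⟨⟨c, d⟩, hcd⟩
    · have hg : RingQuot.mkAlgHom ℂ (ZigzagRel ℂ G) (FreeAlgebra.ι ℂ (Sum.inl v)) = E G v := rfl
      rw [hg, η0L_apply, η0L_apply, smul_add, smul_add, Finset.smul_sum]
      have T1 : eP G a ⊗ₜ[ℂ] toTM G a M (om hconn hcard a) (e_mul_om_self hconn hcard a) (E G v • m)
          = E G v • (eP G a ⊗ₜ[ℂ] toTM G a M (om hconn hcard a) (e_mul_om_self hconn hcard a) m) := by
        rw [TensorProduct.smul_tmul']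
        by_cases hva : v = a
        · replace hva : a = v := hva.symm
          subst hva
          refine tmul_congr a ?_ ?_
          · rw [smulP_val, eP_val, e_idem0]
          · rw [toTM_val, toTM_val, ← mul_smul, om_mul_e_self]
        · rw [tmul_zero_right a _ _ (by
              rw [toTM_val, ← mul_smul, om_mul_E, if_neg hva, zero_smul]),
            tmul_zero_left a _ (by rw [smulP_val, eP_val, E_mul_E, if_neg hva]) _]
      have T3 : omP hconn hcard a ⊗ₜ[ℂ] toTM G a M (E G a) (e_idem0 a) (E G v • m)
          = E G v • (omP hconn hcard a ⊗ₜ[ℂ] toTM G a M (E G a) (e_idem0 a) m) := by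
        rw [TensorProduct.smul_tmul']
        by_cases hva : v = a
        · replace hva : a = v := hva.symm
          subst hva
          refine tmul_congr a ?_ ?_
          · rw [smulP_val, omP_val, e_mul_om_self]
          · rw [toTM_val, toTM_val, ← mul_smul, e_idem0]
        · rw [tmul_zero_right a _ _ (by
              rw [toTM_val, ← mul_smul, E_mul_E, if_neg (fun hh => hva hh.symm), zero_smul]),
            tmul_zero_left a _ (by rw [smulP_val, omP_val, E_mul_om, if_neg hva]) _]
      have T2 : ∀ b : V,
          xvP G a b ⊗ₜ[ℂ] toTM G a M (xvr G a b) (e_mul_xvr_self a b) (E G v • m)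
          = E G v • (xvP G a b ⊗ₜ[ℂ] toTM G a M (xvr G a b) (e_mul_xvr_self a b) m) := by
        intro b
        rw [TensorProduct.smul_tmul']
        by_cases hvb : v = b
        · refine tmul_congr a ?_ ?_
          · rw [smulP_val, xvP_val, e_mul_xv, if_pos hvb]
          · rw [toTM_val, toTM_val, ← mul_smul, xvr_mul_e, if_pos hvb]
        · rw [tmul_zero_right a _ _ (by
              rw [toTM_val, ← mul_smul, xvr_mul_e, if_neg hvb, zero_smul]),
            tmul_zero_left a _ (by rw [smulP_val, xvP_val, e_mul_xv, if_neg hvb]) _]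
      rw [T1, T3, Finset.sum_congr rfl (fun b _ => T2 b)]
    · have hg : RingQuot.mkAlgHom ℂ (ZigzagRel ℂ G) (FreeAlgebra.ι ℂ (Sum.inr ⟨(c, d), hcd⟩))
          = X hcd := rfl
      rw [hg, η0L_apply, η0L_apply, smul_add, smul_add, Finset.smul_sum]
      have U1 : eP G a ⊗ₜ[ℂ] toTM G a M (om hconn hcard a) (e_mul_om_self hconn hcard a) (X hcd • m)
          = (0 : ↥(Pleft G a) ⊗[ℂ] ↥(LinearMap.range (eAction G a M))) :=
        tmul_zero_right a _ _ (by rw [toTM_val, ← mul_smul, om_mul_X, zero_smul])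
      have U3 : X hcd • (omP hconn hcard a ⊗ₜ[ℂ] toTM G a M (E G a) (e_idem0 a) m)
          = (0 : ↥(Pleft G a) ⊗[ℂ] ↥(LinearMap.range (eAction G a M))) := by
        rw [TensorProduct.smul_tmul']
        exact tmul_zero_left a _ (by rw [smulP_val, omP_val, X_mul_om]) _
      by_cases hac : a = c
      · subst hac
        have hnd : a ≠ d := hcd.ne
        have S1 : (∑ b : V,
            xvP G a b ⊗ₜ[ℂ] toTM G a M (xvr G a b) (e_mul_xvr_self a b) (X hcd • m))
            = xvP G a d ⊗ₜ[ℂ] toTM G a M (om hconn hcard a)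
                (e_mul_om_self hconn hcard a) m := by
          rw [Finset.sum_eq_single d]
          · refine tmul_congr a rfl ?_
            rw [toTM_val, toTM_val, ← mul_smul, xvr_mul_X hconn hcard a hcd,
              if_pos ⟨rfl, rfl⟩]
          · intro b _ hbd
            exact tmul_zero_right a _ _ (by
              rw [toTM_val, ← mul_smul, xvr_mul_X hconn hcard a hcd,
                if_neg (fun hh => hbd hh.1), zero_smul])
          · intro hd
            exact absurd (Finset.mem_univ d) hd
        have S3 : omP hconn hcard a ⊗ₜ[ℂ] toTM G a M (E G a) (e_idem0 a) (X hcd • m)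
            = (0 : ↥(Pleft G a) ⊗[ℂ] ↥(LinearMap.range (eAction G a M))) :=
          tmul_zero_right a _ _ (by
            rw [toTM_val, ← mul_smul, E_mul_X hcd, if_neg hnd, zero_smul])
        have R1 : X hcd • (eP G a ⊗ₜ[ℂ] toTM G a M (om hconn hcard a)
              (e_mul_om_self hconn hcard a) m)
            = xvP G a d ⊗ₜ[ℂ] toTM G a M (om hconn hcard a)
                (e_mul_om_self hconn hcard a) m := by
          rw [TensorProduct.smul_tmul']
          refine tmul_congr a ?_ rfl
          rw [smulP_val, eP_val, X_mul_E hcd, if_pos rfl, xvP_val, xv, dif_pos hcd]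
        have R2 : (∑ b : V, X hcd • (xvP G a b ⊗ₜ
              toTM G a M (xvr G a b) (e_mul_xvr_self a b) m))
            = (0 : ↥(Pleft G a) ⊗[ℂ] ↥(LinearMap.range (eAction G a M))) := by
          rw [Finset.sum_eq_zero]
          intro b _
          rw [TensorProduct.smul_tmul']
          exact tmul_zero_left a _ (by
            rw [smulP_val, xvP_val, X_mul_xv hconn hcard a hcd,
              if_neg (fun hh => hnd hh.2.symm)]) _
        rw [U1, S1, S3, R1, R2, U3]
        all_goals simp
      · by_cases had : d = a
        · have had' : a = d := had.symm
          subst had'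
          have S1 : (∑ b : V,
              xvP G a b ⊗ₜ[ℂ] toTM G a M (xvr G a b) (e_mul_xvr_self a b) (X hcd • m))
              = (0 : ↥(Pleft G a) ⊗[ℂ] ↥(LinearMap.range (eAction G a M))) := by
            rw [Finset.sum_eq_zero]
            intro b _
            exact tmul_zero_right a _ _ (by
              rw [toTM_val, ← mul_smul, xvr_mul_X hconn hcard a hcd,
                if_neg (fun hh => hac hh.2), zero_smul])
          have S3 : omP hconn hcard a ⊗ₜ[ℂ] toTM G a M (E G a) (e_idem0 a) (X hcd • m)
              = omP hconn hcard a ⊗ₜ[ℂ] toTM G a M (xvr G a c) (e_mul_xvr_self a c) m := by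
            refine tmul_congr a rfl ?_
            rw [toTM_val, toTM_val, ← mul_smul, E_mul_X hcd, if_pos rfl]
            have : X hcd = xvr G a c := by
              rw [xvr, dif_pos hcd.symm]
            rw [this]
          have R1 : X hcd • (eP G a ⊗ₜ[ℂ] toTM G a M (om hconn hcard a)
                (e_mul_om_self hconn hcard a) m)
              = (0 : ↥(Pleft G a) ⊗[ℂ] ↥(LinearMap.range (eAction G a M))) := by
            rw [TensorProduct.smul_tmul']
            exact tmul_zero_left a _ (by
              rw [smulP_val, eP_val, X_mul_E hcd, if_neg hac]) _
          have R2 : (∑ b : V, X hcd • (xvP G a b ⊗ₜ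
                toTM G a M (xvr G a b) (e_mul_xvr_self a b) m))
              = omP hconn hcard a ⊗ₜ[ℂ] toTM G a M (xvr G a c) (e_mul_xvr_self a c) m := by
            rw [Finset.sum_eq_single c]
            · rw [TensorProduct.smul_tmul']
              refine tmul_congr a ?_ rfl
              rw [smulP_val, xvP_val, X_mul_xv hconn hcard a hcd, if_pos ⟨rfl, rfl⟩, omP_val]
            · intro b _ hbc
              rw [TensorProduct.smul_tmul']
              exact tmul_zero_left a _ (by
                rw [smulP_val, xvP_val, X_mul_xv hconn hcard a hcd,
                  if_neg (fun hh => hbc hh.1)]) _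
            · intro hd
              exact absurd (Finset.mem_univ c) hd
          rw [U1, S1, S3, R1, R2, U3]
          all_goals simp
        · have S1 : (∑ b : V,
              xvP G a b ⊗ₜ[ℂ] toTM G a M (xvr G a b) (e_mul_xvr_self a b) (X hcd • m))
              = (0 : ↥(Pleft G a) ⊗[ℂ] ↥(LinearMap.range (eAction G a M))) := by
            rw [Finset.sum_eq_zero]
            intro b _
            exact tmul_zero_right a _ _ (by
              rw [toTM_val, ← mul_smul, xvr_mul_X hconn hcard a hcd,
                if_neg (fun hh => hac hh.2), zero_smul])
          have S3 : omP hconn hcard a ⊗ₜ[ℂ] toTM G a M (E G a) (e_idem0 a) (X hcd • m)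
              = (0 : ↥(Pleft G a) ⊗[ℂ] ↥(LinearMap.range (eAction G a M))) :=
            tmul_zero_right a _ _ (by
              rw [toTM_val, ← mul_smul, E_mul_X hcd, if_neg (fun hh => had hh.symm), zero_smul])
          have R1 : X hcd • (eP G a ⊗ₜ[ℂ] toTM G a M (om hconn hcard a)
                (e_mul_om_self hconn hcard a) m)
              = (0 : ↥(Pleft G a) ⊗[ℂ] ↥(LinearMap.range (eAction G a M))) := by
            rw [TensorProduct.smul_tmul']
            exact tmul_zero_left a _ (by
              rw [smulP_val, eP_val, X_mul_E hcd, if_neg hac]) _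
          have R2 : (∑ b : V, X hcd • (xvP G a b ⊗ₜ
                toTM G a M (xvr G a b) (e_mul_xvr_self a b) m))
              = (0 : ↥(Pleft G a) ⊗[ℂ] ↥(LinearMap.range (eAction G a M))) := by
            rw [Finset.sum_eq_zero]
            intro b _
            rw [TensorProduct.smul_tmul']
            exact tmul_zero_left a _ (by
              rw [smulP_val, xvP_val, X_mul_xv hconn hcard a hcd,
                if_neg (fun hh => had hh.2)]) _
          rw [U1, S1, S3, R1, R2, U3]
          all_goals simp

def unit2 (M : ModuleCat (ZigzagAlgebra ℂ G)) : M ⟶ (functorT G a ⋙ functorS G a).obj M :=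
  ModuleCat.ofHom
 ({toFun := η0L hconn hcard a M
   map_add' m n := (η0L hconn hcard a M).map_add m n
   map_smul' r m := η0_smul hconn hcard a M r m} :
    M →ₗ[ZigzagAlgebra ℂ G] (Pleft G a ⊗[ℂ] LinearMap.range (eAction G a M)))

lemma τ_xv (b : V) : τ G (xv G a b) = 0 := by
  rw [xv]
  split_ifs with h
  · exact τ_X h
  · exact map_zero _

def εF (W : ModuleCat ℂ) : ↥(Pleft G a) →ₗ[ℂ] W →ₗ[ℂ] W where
  toFun x := τ G (x : ZigzagAlgebra ℂ G) • LinearMap.id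
  map_add' x y := by
    simp only [Submodule.coe_add, map_add, add_smul]
  map_smul' c x := by
    simp only [Submodule.coe_smul_of_tower, map_smul, smul_assoc, RingHom.id_apply]

lemma εF_tmul (W : ModuleCat ℂ) (x : Pleft G a) (w : W) :
    TensorProduct.lift (εF a W) (x ⊗ₜ[ℂ] w) = τ G (x : ZigzagAlgebra ℂ G) • w := rfl

def counit2 (W : ModuleCat ℂ) : (functorS G a ⋙ functorT G a).obj W ⟶ W := ModuleCat.ofHom
 ({toFun t := TensorProduct.lift (εF a W) t.1
   map_add' t t' := by
    show TensorProduct.lift (εF a W) ((t + t').1)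
      = TensorProduct.lift (εF a W) t.1 + TensorProduct.lift (εF a W) t'.1
    exact (TensorProduct.lift (εF a W)).map_add t.1 t'.1
   map_smul' c t := by
    have alg_smul : ∀ (u : ↥(Pleft G a) ⊗[ℂ] W),
        (algebraMap ℂ (ZigzagAlgebra ℂ G) c) • u = c • u := by
      intro u
      induction u using TensorProduct.induction_on with
      | zero => rw [smul_zero, smul_zero]
      | tmul x w =>
        rw [TensorProduct.smul_tmul', TensorProduct.smul_tmul', algebraMap_smul]
      | add u u' hu hu' => rw [smul_add, smul_add, hu, hu']
    show TensorProduct.lift (εF a W)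
        ((algebraMap ℂ (ZigzagAlgebra ℂ G) c • t.1 : ↥(Pleft G a) ⊗[ℂ] W))
      = c • TensorProduct.lift (εF a W) t.1
    exact (congrArg (TensorProduct.lift (εF a W)) (alg_smul t.1)).trans
      ((TensorProduct.lift (εF a W)).map_smul c t.1)} :
    LinearMap.range (eAction G a ((functorS G a).obj W)) →ₗ[ℂ] W)

lemma counit2_apply (W : ModuleCat ℂ) (t : (functorS G a ⋙ functorT G a).obj W) :
    (counit2 a W).hom t = TensorProduct.lift (εF a W) t.1 := rfl

lemma counit2_nat_aux (W W' : ModuleCat ℂ) (f : W ⟶ W')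
    (u : ↥(Pleft G a) ⊗[ℂ] W) :
    TensorProduct.lift (εF a W') ((TensorProduct.AlgebraTensorModule.map
      (LinearMap.id (R := ZigzagAlgebra ℂ G)) f.hom) u) = f.hom (TensorProduct.lift (εF a W) u) := by
  induction u using TensorProduct.induction_on with
  | zero => simp
  | tmul x w =>
    rw [TensorProduct.AlgebraTensorModule.map_tmul, εF_tmul]
    show τ G (x : ZigzagAlgebra ℂ G) • f.hom w = f.hom (τ G (x : ZigzagAlgebra ℂ G) • w)
    rw [map_smul]
  | add u u' hu hu' => simp only [map_add, hu, hu']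

def adj2 : functorT G a ⊣ functorS G a :=
  Adjunction.mkOfUnitCounit
    { unit :=
        { app := unit2 hconn hcard a
          naturality := by
            intro M N f
            apply ModuleCat.hom_ext
            apply LinearMap.ext
            intro m
            have k1 : ∀ (r : ZigzagAlgebra ℂ G) (hr : E G a * r = r) (x : Pleft G a),
                (TensorProduct.AlgebraTensorModule.map
                    (LinearMap.id : ↥(Pleft G a) →ₗ[ZigzagAlgebra ℂ G] ↥(Pleft G a))
                    ((functorT G a).map f).hom)
                  (x ⊗ₜ[ℂ] toTM G a M r hr m) = x ⊗ₜ[ℂ] toTM G a N r hr (f.hom m) := by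
              intro r hr x
              erw [TensorProduct.AlgebraTensorModule.map_tmul]
              refine tmul_congr a rfl ?_
              show f.hom ((toTM G a M r hr m).1) = (toTM G a N r hr (f.hom m)).1
              exact map_smul f.hom r m
            have key : (TensorProduct.AlgebraTensorModule.map
                (LinearMap.id : ↥(Pleft G a) →ₗ[ZigzagAlgebra ℂ G] ↥(Pleft G a))
                ((functorT G a).map f).hom) (η0L hconn hcard a M m) = η0L hconn hcard a N (f.hom m) := by
              erw [η0L_apply, η0L_apply, map_add, map_add, map_sum,
                k1, k1, Finset.sum_congr rfl (fun b _ => k1 _ _ _)]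
              rfl
            exact key.symm }
      counit :=
        { app := counit2 a
          naturality := by
            intro W W' f
            apply ModuleCat.hom_ext
            apply LinearMap.ext
            intro t
            show (counit2 a W').hom (((functorT G a).map ((functorS G a).map f)).hom t)
              = f.hom ((counit2 a W).hom t)
            rw [counit2_apply, counit2_apply]
            exact counit2_nat_aux a W W' f t.1 }
      left_triangle := by
        apply NatTrans.ext
        funext M
        apply ModuleCat.hom_ext
        apply LinearMap.ext
        intro t
        show (counit2 a ((functorT G a).obj M)).hom
          (((functorT G a).map (unit2 hconn hcard a M)).hom t) = t
        rw [counit2_apply]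
        show TensorProduct.lift (εF a ((functorT G a).obj M)) (η0L hconn hcard a M t.1) = t
        erw [η0L_apply, map_add, map_add, εF_tmul, εF_tmul, map_sum]
        erw [Finset.sum_congr rfl (fun b _ => by
          erw [εF_tmul, xvP_val, τ_xv, zero_smul] :
            ∀ b ∈ Finset.univ, TensorProduct.lift (εF a ((functorT G a).obj M))
              (xvP G a b ⊗ₜ[ℂ] toTM G a M (xvr G a b) (e_mul_xvr_self a b) t.1) = 0)]
        erw [eP_val, τ_E, zero_smul, omP_val, τ_om, one_smul, Finset.sum_const_zero,
          add_zero, zero_add]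
        apply Subtype.ext
        erw [toTM_val]
        exact (mem_TM_iff G a).1 t.2
      right_triangle := by
        apply NatTrans.ext
        funext W
        apply ModuleCat.hom_ext
        apply LinearMap.ext
        intro t
        show (TensorProduct.AlgebraTensorModule.map LinearMap.id (counit2 a W).hom)
          (η0L hconn hcard a ((functorS G a).obj W) t) = t
        induction t using TensorProduct.induction_on with
        | zero => erw [LinearMap.map_zero, map_zero]
        | tmul x w =>
          have c0 : ∀ (r : ZigzagAlgebra ℂ G) (hr : E G a * r = r),
              (counit2 a W).hom (toTM G a ((functorS G a).obj W) r hr (x ⊗ₜ[ℂ] w))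
                = τ G (r * (x : ZigzagAlgebra ℂ G)) • w := by
            intro r hr
            erw [counit2_apply]
            have : (toTM G a ((functorS G a).obj W) r hr (x ⊗ₜ[ℂ] w)).1
                = (r • x) ⊗ₜ[ℂ] w := by
              erw [toTM_val]
              exact TensorProduct.smul_tmul' r x w
            rw [this, εF_tmul, smulP_val]
          erw [η0L_apply, map_add, map_add, map_sum, TensorProduct.AlgebraTensorModule.map_tmul,
            TensorProduct.AlgebraTensorModule.map_tmul]
          erw [Finset.sum_congr rfl (fun b _ => by
            erw [TensorProduct.AlgebraTensorModule.map_tmul, LinearMap.id_apply, c0] :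
              ∀ b ∈ Finset.univ, (TensorProduct.AlgebraTensorModule.map LinearMap.id
                (counit2 a W).hom) (xvP G a b ⊗ₜ
                  toTM G a ((functorS G a).obj W) (xvr G a b) (e_mul_xvr_self a b) (x ⊗ₜ[ℂ] w))
                = xvP G a b ⊗ₜ[ℂ]
                    (τ G (xvr G a b * (x : ZigzagAlgebra ℂ G)) • w))]
          rw [LinearMap.id_apply, LinearMap.id_apply, c0, c0]
          rw [TensorProduct.tmul_smul, TensorProduct.tmul_smul,
            Finset.sum_congr rfl (fun b _ => TensorProduct.tmul_smul _ _ _)]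
          rw [TensorProduct.smul_tmul', TensorProduct.smul_tmul',
            Finset.sum_congr rfl (fun b _ => TensorProduct.smul_tmul' _ _ _),
            ← TensorProduct.sum_tmul, ← TensorProduct.add_tmul, ← TensorProduct.add_tmul]
          have hx : (τ G (om hconn hcard a * (x : ZigzagAlgebra ℂ G)) • eP G a
              + (∑ b : V, τ G (xvr G a b * (x : ZigzagAlgebra ℂ G)) • xvP G a b)
              + τ G (E G a * (x : ZigzagAlgebra ℂ G)) • omP hconn hcard a) = x := by
            apply Subtype.ext
            push_cast [Submodule.coe_add, Submodule.coe_smul_of_tower,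
              AddSubmonoidClass.coe_finset_sum]
            exact recon hconn hcard a (x : ZigzagAlgebra ℂ G)
              (Pleft_subset_span hconn hcard a _ x.2)
          rw [hx]
        | add t t' ht ht' => exact ((congrArg _ ((η0L hconn hcard a ((functorS G a).obj W)).map_add t t')).trans
            (LinearMap.map_add _ _ _)).trans (congrArg₂ (· + ·) ht ht') }

end Adj2

end Zig

/-- for a vertex `a` of `Γ`, the functor
`S_a : ℂ-Vect ⥤ A(Γ)-Mod`, `V ↦ A(Γ)e_a ⊗_ℂ V` is left adjoint to the functor
`T_a : A(Γ)-Mod ⥤ ℂ-Vect`, `M ↦ e_a M ( = e_a A(Γ) ⊗_{A(Γ)} M )`, and `T_a` is in turn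
left adjoint to `S_a`. -/
theorem functorS_adj_functorT_adj_functorS {V : Type} [Fintype V] [DecidableEq V]
    (G : SimpleGraph V) [DecidableRel G.Adj]
    (hconn : G.Connected) (hcard : 2 < Fintype.card V) (a : V) :
    Nonempty (functorS G a ⊣ functorT G a) ∧ Nonempty (functorT G a ⊣ functorS G a) := by
  exact ⟨⟨Zig.adj1 G a⟩, ⟨Zig.adj2 hconn hcard a⟩⟩

end
end

section
/- For all simple roots α, β ∈ Π, the ℚ(q)-linear endomorphisms of R satisfy E_α F_β − F_β E_α = δ_{αβ} (K_α − K_α⁻¹)/(q − q⁻¹); that is, E_α F_β = F_β E_α whenever α ≠ β, and (q − q⁻¹)(E_α F_α − F_α E_α) = K_α − K_α⁻¹. -/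
/-!
The adjoint representation of a simply-laced quantum group, realized concretely on the
`ℚ(q)`-vector space with basis `{x_μ : μ ∈ Φ} ∪ {h_α : α ∈ Π}`.
-/

noncomputable section

open Polynomial

/-- The field `ℚ(q)` of rational functions over `ℚ`. -/
abbrev Qq : Type := RatFunc ℚ

/-- The indeterminate `q ∈ ℚ(q)`. -/
def qv : Qq := RatFunc.X

/-- A datum abstracting a simply-laced root system `Φ` with base `Π`, normalized so that
`(α, α) = 2` for roots: a symmetric bilinear form `B` together with the standard
combinatorial facts about pairings of roots and simple roots that hold in any finite
reduced irreducible crystallographic simply-laced root system. -/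
structure SimplyLacedDatum (E : Type) [AddCommGroup E] [Module ℚ E] where
  /-- the inner product `(·,·)` -/
  B : E →ₗ[ℚ] E →ₗ[ℚ] ℚ
  symm : ∀ x y : E, B x y = B y x
  /-- the set of roots `Φ` -/
  Phi : Set E
  /-- the base `Π` of simple roots -/
  Base : Set E
  base_sub : Base ⊆ Phi
  phi_finite : Phi.Finite
  zero_not_mem : (0 : E) ∉ Phi
  crystallographic : ∀ μ ∈ Phi, ∀ ν ∈ Phi, ∃ n : ℤ, B μ ν = n
  norm_two : ∀ μ ∈ Phi, B μ μ = 2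
  neg_mem : ∀ μ ∈ Phi, -μ ∈ Phi
  base_pair : ∀ α ∈ Base, ∀ β ∈ Base, α ≠ β → B α β = 0 ∨ B α β = -1
  pair_range : ∀ μ ∈ Phi, ∀ α ∈ Base,
      B μ α = -2 ∨ B μ α = -1 ∨ B μ α = 0 ∨ B μ α = 1 ∨ B μ α = 2
  pair_two_iff : ∀ μ ∈ Phi, ∀ α ∈ Base, (B μ α = 2 ↔ μ = α)
  pair_neg_two_iff : ∀ μ ∈ Phi, ∀ α ∈ Base, (B μ α = -2 ↔ μ = -α)
  add_mem : ∀ μ ∈ Phi, ∀ α ∈ Base, B μ α = -1 → μ + α ∈ Phi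
  sub_mem : ∀ μ ∈ Phi, ∀ α ∈ Base, B μ α = 1 → μ - α ∈ Phi

namespace SimplyLacedDatum

variable {E : Type} [AddCommGroup E] [Module ℚ E] (D : SimplyLacedDatum E)

/-- The index set for the canonical basis of the adjoint representation:
one index for each root `μ ∈ Φ` (the vector `x_μ`) and one for each simple root
`α ∈ Π` (the vector `h_α`). -/
def Idx : Type := {μ : E // μ ∈ D.Phi} ⊕ {α : E // α ∈ D.Base}

/-- The adjoint representation `R`, as the free `ℚ(q)`-module on `Idx`. -/
def R : Type := D.Idx →₀ Qq

instance : AddCommGroup D.R := inferInstanceAs (AddCommGroup (D.Idx →₀ Qq))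
instance : Module Qq D.R := inferInstanceAs (Module Qq (D.Idx →₀ Qq))

/-- The canonical basis vector `x_μ`, for a root `μ ∈ Φ`. -/
def xv (μ : E) (h : μ ∈ D.Phi) : D.R := Finsupp.single (Sum.inl ⟨μ, h⟩) 1

/-- The canonical basis vector `h_α`, for a simple root `α ∈ Π`. -/
def hv (α : E) (h : α ∈ D.Base) : D.R := Finsupp.single (Sum.inr ⟨α, h⟩) 1

/-- The `ℚ(q)`-linear operator on `R` sending the basis vector indexed by `i` to `v i`. -/
def opOf (v : D.Idx → D.R) : D.R →ₗ[Qq] D.R :=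
  Finsupp.lsum Qq fun i => LinearMap.toSpanSingleton Qq D.R (v i)

open Classical in
/-- The images of the basis vectors under `E_α`. -/
def Evec (α : E) (hα : α ∈ D.Base) : D.Idx → D.R := fun i =>
  match i with
  | Sum.inl μ =>
      if h : D.B μ.1 α = -1 then D.xv (μ.1 + α) (D.add_mem μ.1 μ.2 α hα h)
      else if D.B μ.1 α = -2 then D.hv α hα
      else 0
  | Sum.inr β =>
      if β.1 = α then (qv + qv⁻¹) • D.xv α (D.base_sub hα)
      else if D.B β.1 α = -1 then D.xv α (D.base_sub hα)
      else 0

open Classical in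
/-- The images of the basis vectors under `F_α`. -/
def Fvec (α : E) (hα : α ∈ D.Base) : D.Idx → D.R := fun i =>
  match i with
  | Sum.inl μ =>
      if h : D.B μ.1 α = 1 then D.xv (μ.1 - α) (D.sub_mem μ.1 μ.2 α hα h)
      else if D.B μ.1 α = 2 then D.hv α hα
      else 0
  | Sum.inr β =>
      if β.1 = α then (qv + qv⁻¹) • D.xv (-α) (D.neg_mem α (D.base_sub hα))
      else if D.B β.1 α = -1 then D.xv (-α) (D.neg_mem α (D.base_sub hα))
      else 0

/-- The images of the basis vectors under `K_α`: `K_α x_μ = q^{(α,μ)} x_μ`,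
`K_α h_β = h_β`. -/
def Kvec (α : E) (hα : α ∈ D.Base) : D.Idx → D.R := fun i =>
  match i with
  | Sum.inl μ => qv ^ (D.B α μ.1).num • D.xv μ.1 μ.2
  | Sum.inr β => D.hv β.1 β.2

/-- The images of the basis vectors under `K_α⁻¹`: `K_α⁻¹ x_μ = q^{−(α,μ)} x_μ`,
`K_α⁻¹ h_β = h_β`. -/
def Kinvvec (α : E) (hα : α ∈ D.Base) : D.Idx → D.R := fun i =>
  match i with
  | Sum.inl μ => qv ^ (-(D.B α μ.1).num) • D.xv μ.1 μ.2
  | Sum.inr β => D.hv β.1 β.2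

/-- The operator `E_α` on the adjoint representation. -/
def opE (α : E) (hα : α ∈ D.Base) : D.R →ₗ[Qq] D.R := D.opOf (D.Evec α hα)

/-- The operator `F_α` on the adjoint representation. -/
def opF (α : E) (hα : α ∈ D.Base) : D.R →ₗ[Qq] D.R := D.opOf (D.Fvec α hα)

/-- The operator `K_α` on the adjoint representation. -/
def opK (α : E) (hα : α ∈ D.Base) : D.R →ₗ[Qq] D.R := D.opOf (D.Kvec α hα)

/-- The operator `K_α⁻¹` on the adjoint representation. -/
def opKinv (α : E) (hα : α ∈ D.Base) : D.R →ₗ[Qq] D.R := D.opOf (D.Kinvvec α hα)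

end SimplyLacedDatum

end

/-!
Both sides are compared on the basis `{x_μ} ∪ {h_γ}`. For `α ≠ β` we have `(β, α) ∈ {0, -1}`,
and apart from `μ = β` and `μ = -α` we have `(μ, α) ≥ -1` and `(μ, β) ≤ 1`; then
`E_α F_β x_μ` and `F_β E_α x_μ` both equal `x_{μ+α-β}` if `(μ, α) = -1`, `(μ, β) = 1`,
`(α, β) = 0`, and vanish otherwise. On `h_γ` both vanish because `E_α x_{-β} = F_β x_α = 0`.
For `α = β`, the vector `x_μ` is an eigenvector of `E_α F_α - F_α E_α` with eigenvalue
`(q^n - q^{-n}) / (q - q⁻¹)`, `n = (μ, α) ∈ {-2, …, 2}`, and `E_α h_γ`, `F_α h_γ` are the same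
multiple `c` of `x_α`, `x_{-α}`, so `E_α F_α h_γ = c h_α = F_α E_α h_γ`.
-/

namespace SimplyLacedDatum

variable {E : Type} [AddCommGroup E] [Module ℚ E] (D : SimplyLacedDatum E)

section Basis

lemma opOf_xv (v : D.Idx → D.R) (μ : E) (hμ : μ ∈ D.Phi) :
    D.opOf v (D.xv μ hμ) = v (Sum.inl ⟨μ, hμ⟩) := by
  erw [opOf, Finsupp.lsum_single]
  exact one_smul _ _

lemma opOf_hv (v : D.Idx → D.R) (γ : E) (hγ : γ ∈ D.Base) :
    D.opOf v (D.hv γ hγ) = v (Sum.inr ⟨γ, hγ⟩) := by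
  erw [opOf, Finsupp.lsum_single]
  exact one_smul _ _

lemma xv_congr {μ ν : E} (hμ : μ ∈ D.Phi) (hν : ν ∈ D.Phi) (h : μ = ν) :
    D.xv μ hμ = D.xv ν hν := by
  subst h; rfl

lemma ext_xv_hv {f g : D.R →ₗ[Qq] D.R}
    (hx : ∀ μ hμ, f (D.xv μ hμ) = g (D.xv μ hμ))
    (hh : ∀ γ hγ, f (D.hv γ hγ) = g (D.hv γ hγ)) : f = g := by
  refine Finsupp.lhom_ext' fun i => LinearMap.ext_ring ?_
  rcases i with ⟨μ, hμ⟩ | ⟨γ, hγ⟩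
  exacts [hx μ hμ, hh γ hγ]

end Basis

lemma B_eq_neg_one_or_nonneg {μ α : E} (hμ : μ ∈ D.Phi) (hα : α ∈ D.Base) (h : μ ≠ -α) :
    D.B μ α = -1 ∨ 0 ≤ D.B μ α := by
  have h2 : D.B μ α ≠ -2 := fun h2 => h ((D.pair_neg_two_iff μ hμ α hα).mp h2)
  rcases D.pair_range μ hμ α hα with h' | h' | h' | h' | h'
    <;> first | exact absurd h' h2 | norm_num [h']

lemma B_eq_one_or_nonpos {μ α : E} (hμ : μ ∈ D.Phi) (hα : α ∈ D.Base) (h : μ ≠ α) :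
    D.B μ α = 1 ∨ D.B μ α ≤ 0 := by
  have h2 : D.B μ α ≠ 2 := fun h2 => h ((D.pair_two_iff μ hμ α hα).mp h2)
  rcases D.pair_range μ hμ α hα with h' | h' | h' | h' | h'
    <;> first | exact absurd h' h2 | norm_num [h']

section Action

variable {α : E} (hα : α ∈ D.Base)

lemma opE_xv_of_eq_neg_one {μ : E} (hμ : μ ∈ D.Phi) (h : D.B μ α = -1) :
    D.opE α hα (D.xv μ hμ) = D.xv (μ + α) (D.add_mem μ hμ α hα h) := by
  simp [opE, opOf_xv, Evec, h]

lemma opE_xv_neg_self :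
    D.opE α hα (D.xv (-α) (D.neg_mem α (D.base_sub hα))) = D.hv α hα := by
  simp [opE, opOf_xv, Evec, D.norm_two α (D.base_sub hα)]

lemma opE_xv_of_nonneg {μ : E} (hμ : μ ∈ D.Phi) (h : 0 ≤ D.B μ α) :
    D.opE α hα (D.xv μ hμ) = 0 := by
  simp only [opE, opOf_xv, Evec]
  rw [dif_neg (by linarith), if_neg (by linarith)]

lemma opF_xv_of_eq_one {μ : E} (hμ : μ ∈ D.Phi) (h : D.B μ α = 1) :
    D.opF α hα (D.xv μ hμ) = D.xv (μ - α) (D.sub_mem μ hμ α hα h) := by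
  simp [opF, opOf_xv, Fvec, h]

lemma opF_xv_self :
    D.opF α hα (D.xv α (D.base_sub hα)) = D.hv α hα := by
  simp [opF, opOf_xv, Fvec, D.norm_two α (D.base_sub hα)]

lemma opF_xv_of_nonpos {μ : E} (hμ : μ ∈ D.Phi) (h : D.B μ α ≤ 0) :
    D.opF α hα (D.xv μ hμ) = 0 := by
  simp only [opF, opOf_xv, Fvec]
  rw [dif_neg (by linarith), if_neg (by linarith)]

open Classical in
noncomputable def hvCoeff (γ α : E) : Qq :=
  if γ = α then qv + qv⁻¹ else if D.B γ α = -1 then 1 else 0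

lemma opE_hv (γ : E) (hγ : γ ∈ D.Base) :
    D.opE α hα (D.hv γ hγ) = D.hvCoeff γ α • D.xv α (D.base_sub hα) := by
  simp only [opE, opOf_hv, Evec, hvCoeff]
  split_ifs <;> simp

lemma opF_hv (γ : E) (hγ : γ ∈ D.Base) :
    D.opF α hα (D.hv γ hγ) = D.hvCoeff γ α • D.xv (-α) (D.neg_mem α (D.base_sub hα)) := by
  simp only [opF, opOf_hv, Fvec, hvCoeff]
  split_ifs <;> simp

lemma opK_xv_of_eq {μ : E} (hμ : μ ∈ D.Phi) {n : ℤ} (h : D.B μ α = n) :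
    D.opK α hα (D.xv μ hμ) = qv ^ n • D.xv μ hμ := by
  simp [opK, opOf_xv, Kvec, D.symm α μ, h]

lemma opKinv_xv_of_eq {μ : E} (hμ : μ ∈ D.Phi) {n : ℤ} (h : D.B μ α = n) :
    D.opKinv α hα (D.xv μ hμ) = qv ^ (-n) • D.xv μ hμ := by
  simp [opKinv, opOf_xv, Kinvvec, D.symm α μ, h]

lemma opK_hv (γ : E) (hγ : γ ∈ D.Base) : D.opK α hα (D.hv γ hγ) = D.hv γ hγ :=
  D.opOf_hv _ γ hγ

lemma opKinv_hv (γ : E) (hγ : γ ∈ D.Base) : D.opKinv α hα (D.hv γ hγ) = D.hv γ hγ :=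
  D.opOf_hv _ γ hγ

end Action

section Commute

variable {α β : E} (hα : α ∈ D.Base) (hβ : β ∈ D.Base)

lemma opE_opF_xv_self_comm (hne : α ≠ β) :
    D.opE α hα (D.opF β hβ (D.xv β (D.base_sub hβ))) =
      D.opF β hβ (D.opE α hα (D.xv β (D.base_sub hβ))) := by
  rw [D.opF_xv_self, D.opE_hv, hvCoeff, if_neg hne.symm]
  rcases D.base_pair β hβ α hα hne.symm with hc | hc
  · rw [if_neg (by rw [hc]; norm_num), zero_smul, D.opE_xv_of_nonneg hα _ hc.ge, map_zero]
  · have h : D.B (β + α) β = 1 := by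
      rw [map_add, LinearMap.add_apply, D.symm α β, hc, D.norm_two β (D.base_sub hβ)]; norm_num
    rw [if_pos hc, one_smul, D.opE_xv_of_eq_neg_one hα _ hc, D.opF_xv_of_eq_one hβ _ h,
      D.xv_congr _ _ (add_sub_cancel_left β α)]

lemma opE_opF_xv_neg_comm (hne : α ≠ β) :
    D.opE α hα (D.opF β hβ (D.xv (-α) (D.neg_mem α (D.base_sub hα)))) =
      D.opF β hβ (D.opE α hα (D.xv (-α) (D.neg_mem α (D.base_sub hα)))) := by
  rw [D.opE_xv_neg_self, D.opF_hv, hvCoeff, if_neg hne]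
  rcases D.base_pair α hα β hβ hne with hc | hc
  · rw [if_neg (by rw [hc]; norm_num), zero_smul,
      D.opF_xv_of_nonpos hβ _ (by simp [hc]), map_zero]
  · have h₁ : D.B (-α) β = 1 := by simp [hc]
    have h₂ : D.B (-α - β) α = -1 := by
      rw [map_sub, map_neg, LinearMap.sub_apply, LinearMap.neg_apply, D.symm β α, hc,
        D.norm_two α (D.base_sub hα)]; norm_num
    rw [if_pos hc, one_smul, D.opF_xv_of_eq_one hβ _ h₁, D.opE_xv_of_eq_neg_one hα _ h₂,
      D.xv_congr _ _ (show -α - β + α = -β by abel)]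

lemma opE_opF_xv_comm_of_ne {μ : E} (hμ : μ ∈ D.Phi) (hμβ : μ ≠ β) (hμα : μ ≠ -α)
    (hne : α ≠ β) :
    D.opE α hα (D.opF β hβ (D.xv μ hμ)) = D.opF β hβ (D.opE α hα (D.xv μ hμ)) := by
  have hsub : D.B (μ - β) α = D.B μ α - D.B β α := by simp
  have hadd : D.B (μ + α) β = D.B μ β + D.B β α := by simp [D.symm α β]
  have hc := D.base_pair β hβ α hα hne.symm
  rcases D.B_eq_one_or_nonpos hμ hβ hμβ with hb | hb <;>
    rcases D.B_eq_neg_one_or_nonneg hμ hα hμα with ha | ha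
  · rw [D.opF_xv_of_eq_one hβ _ hb, D.opE_xv_of_eq_neg_one hα _ ha]
    rcases hc with hc | hc
    · rw [D.opE_xv_of_eq_neg_one hα _ (by rw [hsub, ha, hc]; norm_num),
        D.opF_xv_of_eq_one hβ _ (by rw [hadd, hb, hc]; norm_num),
        D.xv_congr _ _ (sub_add_eq_add_sub μ β α)]
    · rw [D.opE_xv_of_nonneg hα _ (by rw [hsub, ha, hc]; norm_num),
        D.opF_xv_of_nonpos hβ _ (by rw [hadd, hb, hc]; norm_num)]
  · rw [D.opF_xv_of_eq_one hβ _ hb, D.opE_xv_of_nonneg hα _ ha,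
      D.opE_xv_of_nonneg hα _ (by rw [hsub]; rcases hc with hc | hc <;> linarith), map_zero]
  · rw [D.opF_xv_of_nonpos hβ _ hb, D.opE_xv_of_eq_neg_one hα _ ha,
      D.opF_xv_of_nonpos hβ _ (by rw [hadd]; rcases hc with hc | hc <;> linarith), map_zero]
  · rw [D.opF_xv_of_nonpos hβ _ hb, D.opE_xv_of_nonneg hα _ ha, map_zero, map_zero]

lemma opE_opF_hv_comm (hne : α ≠ β) (γ : E) (hγ : γ ∈ D.Base) :
    D.opE α hα (D.opF β hβ (D.hv γ hγ)) = D.opF β hβ (D.opE α hα (D.hv γ hγ)) := by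
  have hc : D.B β α ≤ 0 := by rcases D.base_pair β hβ α hα hne.symm with hc | hc <;> simp [hc]
  rw [D.opF_hv, D.opE_hv, map_smul, map_smul, D.opE_xv_of_nonneg hα _ (by simpa using hc),
    D.opF_xv_of_nonpos hβ _ (by rwa [D.symm]), smul_zero, smul_zero]

lemma opE_comp_opF_comm_of_ne (hne : α ≠ β) :
    D.opE α hα ∘ₗ D.opF β hβ = D.opF β hβ ∘ₗ D.opE α hα := by
  refine D.ext_xv_hv (fun μ hμ => ?_) (D.opE_opF_hv_comm hα hβ hne)
  by_cases hμβ : μ = β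
  · subst hμβ
    exact D.opE_opF_xv_self_comm hα hβ hne
  by_cases hμα : μ = -α
  · subst hμα
    exact D.opE_opF_xv_neg_comm hα hβ hne
  exact D.opE_opF_xv_comm_of_ne hα hβ hμ hμβ hμα hne

end Commute

section Commutator

variable {α : E} (hα : α ∈ D.Base)

lemma commutator_xv {μ : E} (hμ : μ ∈ D.Phi) :
    (qv - qv⁻¹) • (D.opE α hα (D.opF α hα (D.xv μ hμ)) - D.opF α hα (D.opE α hα (D.xv μ hμ))) =
      D.opK α hα (D.xv μ hμ) - D.opKinv α hα (D.xv μ hμ) := by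
  have hαα : D.B α α = 2 := D.norm_two α (D.base_sub hα)
  obtain ⟨n, hn⟩ := D.crystallographic μ hμ α (D.base_sub hα)
  rw [D.opK_xv_of_eq hα hμ hn, D.opKinv_xv_of_eq hα hμ hn, ← sub_smul]
  rcases D.pair_range μ hμ α hα with h | h | h | h | h
  · obtain rfl : n = -2 := by exact_mod_cast hn.symm.trans h
    obtain rfl : μ = -α := (D.pair_neg_two_iff μ hμ α hα).mp h
    rw [D.opF_xv_of_nonpos hα _ (by rw [h]; norm_num), D.opE_xv_neg_self, D.opF_hv, hvCoeff,
      if_pos rfl, map_zero, zero_sub, smul_neg, smul_smul, ← neg_smul]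
    exact congrArg (· • _) (by simp only [neg_neg, zpow_neg, zpow_ofNat]; ring)
  · obtain rfl : n = -1 := by exact_mod_cast hn.symm.trans h
    have h' : D.B (μ + α) α = 1 := by
      rw [map_add, LinearMap.add_apply, h, hαα]; norm_num
    rw [D.opF_xv_of_nonpos hα _ (by rw [h]; norm_num), D.opE_xv_of_eq_neg_one hα _ h,
      D.opF_xv_of_eq_one hα _ h', D.xv_congr _ hμ (add_sub_cancel_right μ α), map_zero,
      zero_sub, smul_neg, ← neg_smul]
    exact congrArg (· • _) (by simp only [neg_neg, zpow_neg, zpow_ofNat]; ring)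
  · obtain rfl : n = 0 := by exact_mod_cast hn.symm.trans h
    rw [D.opF_xv_of_nonpos hα _ h.le, D.opE_xv_of_nonneg hα _ h.ge]
    simp
  · obtain rfl : n = 1 := by exact_mod_cast hn.symm.trans h
    have h' : D.B (μ - α) α = -1 := by
      rw [map_sub, LinearMap.sub_apply, h, hαα]; norm_num
    rw [D.opE_xv_of_nonneg hα _ (by rw [h]; norm_num), D.opF_xv_of_eq_one hα _ h,
      D.opE_xv_of_eq_neg_one hα _ h', D.xv_congr _ hμ (sub_add_cancel μ α), map_zero, sub_zero]
    exact congrArg (· • _) (by simp only [zpow_neg, zpow_ofNat]; ring)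
  · obtain rfl : n = 2 := by exact_mod_cast hn.symm.trans h
    obtain rfl : μ = α := (D.pair_two_iff μ hμ α hα).mp h
    rw [D.opE_xv_of_nonneg hα _ (by rw [h]; norm_num), D.opF_xv_self, D.opE_hv, hvCoeff,
      if_pos rfl, map_zero, sub_zero, smul_smul]
    exact congrArg (· • _) (by simp only [zpow_neg, zpow_ofNat]; ring)

lemma commutator_hv (γ : E) (hγ : γ ∈ D.Base) :
    (qv - qv⁻¹) • (D.opE α hα (D.opF α hα (D.hv γ hγ)) - D.opF α hα (D.opE α hα (D.hv γ hγ))) =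
      D.opK α hα (D.hv γ hγ) - D.opKinv α hα (D.hv γ hγ) := by
  rw [D.opF_hv, D.opE_hv, map_smul, map_smul, D.opE_xv_neg_self, D.opF_xv_self, sub_self,
    smul_zero, D.opK_hv, D.opKinv_hv, sub_self]

end Commutator

end SimplyLacedDatum

/-- on the adjoint representation `R`,
`E_α F_β − F_β E_α = δ_{αβ} (K_α − K_α⁻¹)/(q − q⁻¹)`; that is, `E_α` and `F_β` commute
for `α ≠ β`, and `(q − q⁻¹)(E_α F_α − F_α E_α) = K_α − K_α⁻¹`. -/
theorem SimplyLacedDatum.commutator_EF {E : Type} [AddCommGroup E] [Module ℚ E]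
    (D : SimplyLacedDatum E) (α : E) (hα : α ∈ D.Base) (β : E) (hβ : β ∈ D.Base) :
    (α ≠ β → D.opE α hα ∘ₗ D.opF β hβ = D.opF β hβ ∘ₗ D.opE α hα) ∧
    (qv - qv⁻¹) • (D.opE α hα ∘ₗ D.opF α hα - D.opF α hα ∘ₗ D.opE α hα) =
      D.opK α hα - D.opKinv α hα :=
  ⟨D.opE_comp_opF_comm_of_ne hα hβ,
    D.ext_xv_hv (fun _ hμ => D.commutator_xv hα hμ) (D.commutator_hv hα)⟩
end

section
/- For all simple roots α, β ∈ Π, the operators on R satisfy K_α E_β = q^{(α,β)} E_β K_α and K_α F_β = q^{−(α,β)} F_β K_α as ℚ(q)-linear endomorphisms of R. -/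
/-!
`K_α` is diagonal in the basis `{x_μ} ∪ {h_γ}`: its eigenvalue on a basis vector of weight `ν`
is `q^{(α, ν)}`, where `x_μ` has weight `μ` and `h_γ` weight `0`. The operator `E_β` sends a
basis vector of weight `ν` to a multiple of a basis vector of weight `ν + β`, and `F_β` to one
of weight `ν - β`. Since roots pair integrally, `q^{(α, ν ± β)} = q^{±(α, β)} q^{(α, ν)}`, which
is the commutation relation evaluated on a basis vector.
-/

theorem Module.Basis.comp_eq_smul_comp_of_apply_eq_smul {ι k M : Type*} [CommSemiring k]
    [AddCommMonoid M] [Module k M] (b : Module.Basis ι k M) {K T : M →ₗ[k] M} (c : k)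
    (d : ι → k) (hK : ∀ i, K (b i) = d i • b i) (hKT : ∀ i, K (T (b i)) = (c * d i) • T (b i)) :
    K ∘ₗ T = c • (T ∘ₗ K) :=
  b.ext fun i => by
    simp only [LinearMap.comp_apply, LinearMap.smul_apply, hK, hKT, map_smul, smul_smul]

namespace SimplyLacedDatum

variable {E : Type} [AddCommGroup E] [Module ℚ E] (D : SimplyLacedDatum E)

noncomputable def basis : Module.Basis D.Idx Qq D.R := Finsupp.basisSingleOne

def wt : D.Idx → E
  | Sum.inl μ => μ.1
  | Sum.inr _ => 0

theorem opOf_basis (v : D.Idx → D.R) (i : D.Idx) : D.opOf v (D.basis i) = v i := by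
  change Finsupp.lsum Qq (fun i => LinearMap.toSpanSingleton Qq D.R (v i))
    (Finsupp.single i 1) = v i
  rw [Finsupp.lsum_single, LinearMap.toSpanSingleton_apply, one_smul]

theorem exists_B_wt_eq_intCast {α : E} (hα : α ∈ D.Phi) (i : D.Idx) :
    ∃ n : ℤ, D.B α (D.wt i) = n := by
  rcases i with ⟨μ, hμ⟩ | _
  · exact D.crystallographic α hα μ hμ
  · exact ⟨0, by simp [wt]⟩

def IsWeightVector (ν : E) (v : D.R) : Prop :=
  ∀ α (hα : α ∈ D.Base), D.opK α hα v = qv ^ (D.B α ν).num • v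

variable {D}

theorem isWeightVector_zero (ν : E) : D.IsWeightVector ν 0 := fun _ _ => by
  simp only [map_zero, smul_zero]

theorem IsWeightVector.smul {ν : E} {v : D.R} (hv : D.IsWeightVector ν v) (c : Qq) :
    D.IsWeightVector ν (c • v) := fun α hα => by
  rw [map_smul, hv α hα, smul_comm]

variable (D)

theorem isWeightVector_basis (i : D.Idx) : D.IsWeightVector (D.wt i) (D.basis i) :=
  fun α hα => by
    rw [opK, opOf_basis]
    rcases i with _ | _
    · rfl
    · simp only [Kvec, wt, map_zero, Rat.num_zero, zpow_zero, one_smul]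
      rfl

theorem isWeightVector_xv (μ : E) (h : μ ∈ D.Phi) : D.IsWeightVector μ (D.xv μ h) :=
  D.isWeightVector_basis (Sum.inl ⟨μ, h⟩)

theorem isWeightVector_hv (γ : E) (h : γ ∈ D.Base) : D.IsWeightVector 0 (D.hv γ h) :=
  D.isWeightVector_basis (Sum.inr ⟨γ, h⟩)

theorem isWeightVector_Evec {β : E} (hβ : β ∈ D.Base) (i : D.Idx) :
    D.IsWeightVector (D.wt i + β) (D.Evec β hβ i) := by
  rcases i with ⟨μ, hμ⟩ | ⟨γ, hγ⟩
  · simp only [Evec, wt]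
    split_ifs with _ h₂
    · exact D.isWeightVector_xv _ _
    · rw [(D.pair_neg_two_iff μ hμ β hβ).mp h₂, neg_add_cancel]
      exact D.isWeightVector_hv β hβ
    · exact isWeightVector_zero _
  · simp only [Evec, wt, zero_add]
    split_ifs
    · exact (D.isWeightVector_xv β _).smul _
    · exact D.isWeightVector_xv β _
    · exact isWeightVector_zero _

theorem isWeightVector_Fvec {β : E} (hβ : β ∈ D.Base) (i : D.Idx) :
    D.IsWeightVector (D.wt i - β) (D.Fvec β hβ i) := by
  rcases i with ⟨μ, hμ⟩ | ⟨γ, hγ⟩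
  · simp only [Fvec, wt]
    split_ifs with _ h₂
    · exact D.isWeightVector_xv _ _
    · rw [(D.pair_two_iff μ hμ β hβ).mp h₂, sub_self]
      exact D.isWeightVector_hv β hβ
    · exact isWeightVector_zero _
  · simp only [Fvec, wt, zero_sub]
    split_ifs
    · exact (D.isWeightVector_xv (-β) _).smul _
    · exact D.isWeightVector_xv (-β) _
    · exact isWeightVector_zero _

theorem opK_opE_basis {α β : E} (hα : α ∈ D.Base) (hβ : β ∈ D.Base) (i : D.Idx) :
    D.opK α hα (D.opE β hβ (D.basis i)) =
      (qv ^ (D.B α β).num * qv ^ (D.B α (D.wt i)).num) • D.opE β hβ (D.basis i) := by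
  obtain ⟨m, hm⟩ := D.exists_B_wt_eq_intCast (D.base_sub hα) i
  obtain ⟨n, hn⟩ := D.crystallographic α (D.base_sub hα) β (D.base_sub hβ)
  rw [opE, opOf_basis, D.isWeightVector_Evec hβ i α hα, map_add, hm, hn, ← Int.cast_add,
    Rat.num_intCast, Rat.num_intCast, Rat.num_intCast, zpow_add₀ RatFunc.X_ne_zero, mul_comm, qv]

theorem opK_opF_basis {α β : E} (hα : α ∈ D.Base) (hβ : β ∈ D.Base) (i : D.Idx) :
    D.opK α hα (D.opF β hβ (D.basis i)) =
      (qv ^ (-(D.B α β).num) * qv ^ (D.B α (D.wt i)).num) • D.opF β hβ (D.basis i) := by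
  obtain ⟨m, hm⟩ := D.exists_B_wt_eq_intCast (D.base_sub hα) i
  obtain ⟨n, hn⟩ := D.crystallographic α (D.base_sub hα) β (D.base_sub hβ)
  rw [opF, opOf_basis, D.isWeightVector_Fvec hβ i α hα, map_sub, hm, hn, ← Int.cast_sub,
    Rat.num_intCast, Rat.num_intCast, Rat.num_intCast, sub_eq_neg_add, zpow_add₀ RatFunc.X_ne_zero,
    qv]

end SimplyLacedDatum

/-- for all simple roots `α, β`, on the adjoint representation `R` one
has `K_α E_β = q^{(α,β)} E_β K_α` and `K_α F_β = q^{−(α,β)} F_β K_α`. -/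
theorem SimplyLacedDatum.K_conjugation {E : Type} [AddCommGroup E] [Module ℚ E]
    (D : SimplyLacedDatum E) (α : E) (hα : α ∈ D.Base) (β : E) (hβ : β ∈ D.Base) :
    D.opK α hα ∘ₗ D.opE β hβ = qv ^ (D.B α β).num • (D.opE β hβ ∘ₗ D.opK α hα) ∧
    D.opK α hα ∘ₗ D.opF β hβ = qv ^ (-(D.B α β).num) • (D.opF β hβ ∘ₗ D.opK α hα) :=
  ⟨D.basis.comp_eq_smul_comp_of_apply_eq_smul _ _ (D.isWeightVector_basis · α hα)
      (D.opK_opE_basis hα hβ),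
    D.basis.comp_eq_smul_comp_of_apply_eq_smul _ _ (D.isWeightVector_basis · α hα)
      (D.opK_opF_basis hα hβ)⟩
end
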